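/- arXiv:math/0511565 — 9 statements merged into one kernel-verified Lean document; each statement's English description precedes it below -/
import Mathlib

section
/- Let X, Y be Banach spaces, f : X → Y, v₁, v₂ ∈ X, k, l, m ∈ ℕ, and y, z ∈ Y. Then the set A of all x ∈ X satisfying: (i) ‖(f(x+tu)−f(x))/t − y‖ < 1/l for all u with ‖u−v₁‖ < 1/m and all 0 < t < 1/k; (ii) ‖(f(x+tu)−f(x))/t − z‖ < 1/l for all u with ‖u−v₂‖ < 1/m and all 0 < t < 1/k; (iii) ‖(f(x+s(v₁+v₂))−f(x))/s − (y+z)‖ > 3/l for arbitrarily small s > 0; is directionally porous in X. -/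
open Metric

/-- `M` is porous at `a` in direction `v`: there is `c > 0` such that for every
`ε > 0` there are `t ≥ 0` and `r > 0` with `b = a + t • v`, `‖a - b‖ < ε`,
`B(b,r) ∩ M = ∅` and `r > c * ‖a - b‖`. -/
def PorousAtInDir {X : Type*} [NormedAddCommGroup X] [NormedSpace ℝ X]
    (M : Set X) (a v : X) : Prop :=
  ∃ c > (0:ℝ), ∀ ε > (0:ℝ), ∃ t : ℝ, 0 ≤ t ∧ ∃ r > (0:ℝ),
    ‖a - (a + t • v)‖ < ε ∧ r > c * ‖a - (a + t • v)‖ ∧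
    Metric.ball (a + t • v) r ∩ M = ∅

/-- `M` is directionally porous: at each of its points it is porous in some direction. -/
def DirectionallyPorous {X : Type*} [NormedAddCommGroup X] [NormedSpace ℝ X]
    (M : Set X) : Prop :=
  ∀ a ∈ M, ∃ v : X, v ≠ 0 ∧ PorousAtInDir M a v

/-! The direction is `v₁`, and the holes are the balls `B(x + s v₁, s/m)` for the small steps `s`
of (iii). A point `x'` of such a ball is `x + s u` with `u` close to `v₁`, and
`x + s (v₁ + v₂) = x' + s w` with `w` close to `v₂`. So if `x'` also lay in the set, the difference
quotient of `f` at `x` along `v₁ + v₂` would split into one at `x` (close to `y` by (i) at `x`) and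
one at `x'` (close to `z` by (ii) at `x'`), and would be `2/l`-close to `y + z`, contradicting
(iii). When `v₁ = 0` the same argument with `x' = x` shows that the set is empty. -/

section

open Filter Topology Set

variable {X Y : Type*} [NormedAddCommGroup X] [NormedSpace ℝ X]
  [NormedAddCommGroup Y] [NormedSpace ℝ Y]

theorem DirectionallyPorous.mono {M N : Set X} (hM : DirectionallyPorous M) (hNM : N ⊆ M) :
    DirectionallyPorous N := by
  intro a ha
  obtain ⟨v, hv, c, hc, hpor⟩ := hM a (hNM ha)
  refine ⟨v, hv, c, hc, fun ε hε => ?_⟩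
  obtain ⟨t, ht, r, hr, hdist, hrc, hball⟩ := hpor ε hε
  refine ⟨t, ht, r, hr, hdist, hrc, ?_⟩
  exact Set.subset_eq_empty (Set.inter_subset_inter_right _ hNM) hball

theorem ne_zero_and_porousAtInDir_of_frequently_ball_inter_eq_empty {M : Set X} {a v : X}
    (ha : a ∈ M) {δ : ℝ} (hδ : 0 < δ)
    (h : ∃ᶠ s in 𝓝[>] (0 : ℝ), ball (a + s • v) (s * δ) ∩ M = ∅) :
    v ≠ 0 ∧ PorousAtInDir M a v := by
  have hv : v ≠ 0 := by
    rintro rfl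
    obtain ⟨s, hs, hs₀⟩ := (h.and_eventually self_mem_nhdsWithin).exists
    simp only [smul_zero, add_zero] at hs
    exact Set.eq_empty_iff_forall_notMem.1 hs a ⟨mem_ball_self (mul_pos hs₀ hδ), ha⟩
  have hv_pos : 0 < ‖v‖ := norm_pos_iff.2 hv
  refine ⟨hv, δ / (2 * ‖v‖), by positivity, fun ε hε => ?_⟩
  obtain ⟨s, hs, hs₀, hsε⟩ :=
    (h.and_eventually (Ioo_mem_nhdsGT (div_pos hε hv_pos))).exists
  have hnorm : ‖a - (a + s • v)‖ = s * ‖v‖ := by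
    rw [sub_add_cancel_left, norm_neg, norm_smul, Real.norm_of_nonneg hs₀.le]
  refine ⟨s, hs₀.le, s * δ, by positivity, ?_, ?_, hs⟩ <;> rw [hnorm]
  · exact (lt_div_iff₀ hv_pos).1 hsε
  · calc δ / (2 * ‖v‖) * (s * ‖v‖) = s * δ / 2 := by field_simp
      _ < s * δ := half_lt_self (by positivity)

theorem exists_eq_add_smul_of_mem_ball {a v x : X} {s δ : ℝ} (hs : 0 < s)
    (hx : x ∈ ball (a + s • v) (s * δ)) : ∃ u, ‖u - v‖ < δ ∧ x = a + s • u := by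
  refine ⟨s⁻¹ • (x - a), ?_, by rw [smul_inv_smul₀ hs.ne', add_sub_cancel]⟩
  rw [mem_ball, dist_eq_norm] at hx
  have hu : s⁻¹ • (x - a) - v = s⁻¹ • (x - (a + s • v)) := by
    rw [smul_sub, smul_sub, smul_add, inv_smul_smul₀ hs.ne', sub_add_eq_sub_sub]
  rw [hu, norm_smul, Real.norm_of_nonneg (inv_nonneg.2 hs.le), inv_mul_lt_iff₀ hs]
  exact hx

theorem norm_inv_smul_sub_sub_add_lt {s ε₁ ε₂ : ℝ} {p q r y z : Y}
    (h₁ : ‖s⁻¹ • (q - p) - y‖ < ε₁) (h₂ : ‖s⁻¹ • (r - q) - z‖ < ε₂) :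
    ‖s⁻¹ • (r - p) - (y + z)‖ < ε₁ + ε₂ :=
  calc ‖s⁻¹ • (r - p) - (y + z)‖ = ‖(s⁻¹ • (q - p) - y) + (s⁻¹ • (r - q) - z)‖ := by
        rw [smul_sub, smul_sub, smul_sub]; abel_nf
    _ ≤ ‖s⁻¹ • (q - p) - y‖ + ‖s⁻¹ • (r - q) - z‖ := norm_add_le _ _
    _ < ε₁ + ε₂ := add_lt_add h₁ h₂

def DiffQuotNear (f : X → Y) (x v : X) (y : Y) (δ τ ε : ℝ) : Prop :=
  ∀ u : X, ‖u - v‖ < δ → ∀ t : ℝ, 0 < t → t < τ → ‖t⁻¹ • (f (x + t • u) - f x) - y‖ < ε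

theorem DiffQuotNear.not_diffQuotNear_of_mem_ball {f : X → Y} {a x v₁ v₂ : X} {y z : Y}
    {δ τ ε s : ℝ} (ha : DiffQuotNear f a v₁ y δ τ ε) (hs : s ∈ Ioo 0 τ)
    (hfar : 2 * ε ≤ ‖s⁻¹ • (f (a + s • (v₁ + v₂)) - f a) - (y + z)‖)
    (hx : x ∈ ball (a + s • v₁) (s * δ)) : ¬ DiffQuotNear f x v₂ z δ τ ε := by
  intro hx'
  obtain ⟨u, hu, rfl⟩ := exists_eq_add_smul_of_mem_ball hs.1 hx
  have hmem : a + s • (v₁ + v₂) ∈ ball (a + s • u + s • v₂) (s * δ) := by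
    rwa [smul_add, ← add_assoc, mem_ball, dist_add_right, dist_comm]
  obtain ⟨w, hw, hw_eq⟩ := exists_eq_add_smul_of_mem_ball hs.1 hmem
  have hy := ha u hu s hs.1 hs.2
  have hz := hx' w hw s hs.1 hs.2
  rw [← hw_eq] at hz
  linarith [norm_inv_smul_sub_sub_add_lt hy hz]

theorem directionallyPorous_setOf_diffQuotNear (f : X → Y) (v₁ v₂ : X) (y z : Y) {δ τ ε : ℝ}
    (hδ : 0 < δ) (hτ : 0 < τ) :
    DirectionallyPorous {x | DiffQuotNear f x v₁ y δ τ ε ∧ DiffQuotNear f x v₂ z δ τ ε ∧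
      ∃ᶠ s in 𝓝[>] (0 : ℝ), 2 * ε ≤ ‖s⁻¹ • (f (x + s • (v₁ + v₂)) - f x) - (y + z)‖} := by
  intro a ha
  refine ⟨v₁, ne_zero_and_porousAtInDir_of_frequently_ball_inter_eq_empty ha hδ ?_⟩
  refine (ha.2.2.and_eventually (Ioo_mem_nhdsGT hτ)).mono fun s ⟨hfar, hs⟩ => ?_
  exact Set.eq_empty_iff_forall_notMem.2 fun x ⟨hx, hxM⟩ =>
    ha.1.not_diffQuotNear_of_mem_ball hs hfar hx hxM.2.1

end

theorem dirPorous_of_difference_quotient_conditions_general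
    {X Y : Type*} [NormedAddCommGroup X] [NormedSpace ℝ X]
    [NormedAddCommGroup Y] [NormedSpace ℝ Y]
    (f : X → Y) (v₁ v₂ : X) (k l m : ℕ) (hk : 0 < k) (hm : 0 < m)
    (y z : Y) :
    DirectionallyPorous {x : X |
      (∀ u : X, ‖u - v₁‖ < 1 / (m:ℝ) → ∀ t : ℝ, 0 < t → t < 1 / (k:ℝ) →
        ‖t⁻¹ • (f (x + t • u) - f x) - y‖ < 1 / (l:ℝ)) ∧
      (∀ u : X, ‖u - v₂‖ < 1 / (m:ℝ) → ∀ t : ℝ, 0 < t → t < 1 / (k:ℝ) →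
        ‖t⁻¹ • (f (x + t • u) - f x) - z‖ < 1 / (l:ℝ)) ∧
      (∀ ε > (0:ℝ), ∃ s : ℝ, 0 < s ∧ s < ε ∧
        ‖s⁻¹ • (f (x + s • (v₁ + v₂)) - f x) - (y + z)‖ > 3 / (l:ℝ))} := by
  refine (directionallyPorous_setOf_diffQuotNear f v₁ v₂ y z (ε := 1 / (l : ℝ))
    (one_div_pos.2 (Nat.cast_pos.2 hm)) (one_div_pos.2 (Nat.cast_pos.2 hk))).mono ?_
  rintro x ⟨h₁, h₂, h₃⟩
  refine ⟨h₁, h₂, (nhdsGT_basis 0).frequently_iff.2 fun ε hε => ?_⟩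
  obtain ⟨s, hs₀, hsε, hfar⟩ := h₃ ε hε
  have hl : (0 : ℝ) ≤ 1 / l := by positivity
  exact ⟨s, ⟨hs₀, hsε⟩, by linarith [show (3 : ℝ) / l = 3 * (1 / l) by ring]⟩

theorem dirPorous_of_difference_quotient_conditions
    {X Y : Type*} [NormedAddCommGroup X] [NormedSpace ℝ X] [CompleteSpace X]
    [NormedAddCommGroup Y] [NormedSpace ℝ Y] [CompleteSpace Y]
    (f : X → Y) (v₁ v₂ : X) (k l m : ℕ) (hk : 0 < k) (hl : 0 < l) (hm : 0 < m)
    (y z : Y) :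
    DirectionallyPorous {x : X |
      (∀ u : X, ‖u - v₁‖ < 1 / (m:ℝ) → ∀ t : ℝ, 0 < t → t < 1 / (k:ℝ) →
        ‖t⁻¹ • (f (x + t • u) - f x) - y‖ < 1 / (l:ℝ)) ∧
      (∀ u : X, ‖u - v₂‖ < 1 / (m:ℝ) → ∀ t : ℝ, 0 < t → t < 1 / (k:ℝ) →
        ‖t⁻¹ • (f (x + t • u) - f x) - z‖ < 1 / (l:ℝ)) ∧
      (∀ ε > (0:ℝ), ∃ s : ℝ, 0 < s ∧ s < ε ∧
        ‖s⁻¹ • (f (x + s • (v₁ + v₂)) - f x) - (y + z)‖ > 3 / (l:ℝ))} :=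
  dirPorous_of_difference_quotient_conditions_general f v₁ v₂ k l m hk hm y z
end

section
/- Let X be a Banach space, K ⊂ X a closed convex cone, v ∈ int(K) with ‖v‖ = 1 and v + B(0,1) ⊂ K, and f : X → ℝ a K-increasing function. If x ∈ X satisfies limsup_{t→0} |f(x+tv) − f(x)|/|t| < ∞, then f is pointwise Lipschitz at x, i.e. limsup_{y→x} |f(y)−f(x)|/‖y−x‖ < ∞. -/
open Metric

/-!
Since `v + B(0,1) ⊆ K` and `K` is a cone, every `h` with `‖h‖ < t` satisfies
`x - t • v ≤_K x + h ≤_K x + t • v`. Monotonicity of `f` then traps `f (x + h) - f x` between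
the increments of `f` along the line `x + ℝ v` at `±t`, which are `O(t)` by hypothesis;
taking `t = 2 ‖h‖` gives the pointwise Lipschitz bound.
-/

section ConeOrder

variable {X : Type*} [NormedAddCommGroup X] [NormedSpace ℝ X] {K : Set X} {v : X}

theorem smul_add_mem_of_norm_lt (hKcone : ∀ x ∈ K, ∀ c : ℝ, 0 ≤ c → c • x ∈ K)
    (hball : ∀ h : X, ‖h‖ < 1 → v + h ∈ K) {t : ℝ} {h : X} (ht : ‖h‖ < t) :
    t • v + h ∈ K := by
  have htpos : 0 < t := (norm_nonneg h).trans_lt ht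
  have hsmall : ‖t⁻¹ • h‖ < 1 := by
    rw [norm_smul, norm_inv, Real.norm_of_nonneg htpos.le, inv_mul_lt_one₀ htpos]
    exact ht
  have hrescale : t • v + h = t • (v + t⁻¹ • h) := by
    rw [smul_add, smul_inv_smul₀ htpos.ne']
  rw [hrescale]
  exact hKcone _ (hball _ hsmall) t htpos.le

theorem le_and_le_of_norm_lt (hKcone : ∀ x ∈ K, ∀ c : ℝ, 0 ≤ c → c • x ∈ K)
    (hball : ∀ h : X, ‖h‖ < 1 → v + h ∈ K) {f : X → ℝ}
    (hf : ∀ x y : X, y - x ∈ K → f x ≤ f y) (x : X) {t : ℝ} {h : X} (ht : ‖h‖ < t) :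
    f (x + (-t) • v) ≤ f (x + h) ∧ f (x + h) ≤ f (x + t • v) := by
  constructor
  · apply hf
    convert smul_add_mem_of_norm_lt hKcone hball ht using 1
    rw [neg_smul]
    abel
  · apply hf
    convert smul_add_mem_of_norm_lt hKcone hball (h := -h) (by rwa [norm_neg]) using 1
    abel

theorem abs_sub_le_of_norm_lt (hKcone : ∀ x ∈ K, ∀ c : ℝ, 0 ≤ c → c • x ∈ K)
    (hball : ∀ h : X, ‖h‖ < 1 → v + h ∈ K) {f : X → ℝ}
    (hf : ∀ x y : X, y - x ∈ K → f x ≤ f y) (x : X) {t B : ℝ} {h : X} (ht : ‖h‖ < t)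
    (hplus : |f (x + t • v) - f x| ≤ B) (hminus : |f (x + (-t) • v) - f x| ≤ B) :
    |f (x + h) - f x| ≤ B := by
  obtain ⟨hlow, hupp⟩ := le_and_le_of_norm_lt hKcone hball hf x ht
  calc |f (x + h) - f x|
      ≤ max |f (x + (-t) • v) - f x| |f (x + t • v) - f x| :=
        abs_le_max_abs_abs (sub_le_sub_right hlow _) (sub_le_sub_right hupp _)
    _ ≤ B := max_le hminus hplus

end ConeOrder

theorem pointwiseLipschitz_of_coneMonotone_general
    {X : Type*} [NormedAddCommGroup X] [NormedSpace ℝ X]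
    (K : Set X)
    (hKcone : ∀ x ∈ K, ∀ c : ℝ, 0 ≤ c → c • x ∈ K)
    (v : X)
    (hball : ∀ h : X, ‖h‖ < 1 → v + h ∈ K)
    (f : X → ℝ) (hf : ∀ x y : X, y - x ∈ K → f x ≤ f y)
    (x : X)
    (hx : ∃ C : ℝ, ∃ δ > (0:ℝ), ∀ t : ℝ, |t| < δ → |f (x + t • v) - f x| ≤ C * |t|) :
    ∃ C' : ℝ, ∃ δ' > (0:ℝ), ∀ y : X, ‖y - x‖ < δ' → |f y - f x| ≤ C' * ‖y - x‖ := by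
  obtain ⟨C, δ, hδ, hC⟩ := hx
  refine ⟨2 * C, δ / 2, half_pos hδ, fun y hy => ?_⟩
  rcases (norm_nonneg (y - x)).eq_or_lt with hzero | hpos
  · simp [sub_eq_zero.mp (norm_eq_zero.mp hzero.symm)]
  set t := 2 * ‖y - x‖
  have habs : |t| = t := abs_of_pos (by positivity)
  have htδ : |t| < δ := by rw [habs]; linarith
  have hplus := hC t htδ
  have hminus := hC (-t) (by rwa [abs_neg])
  rw [habs] at hplus
  rw [abs_neg, habs] at hminus
  have key := abs_sub_le_of_norm_lt hKcone hball hf x (h := y - x)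
    (by linarith : ‖y - x‖ < t) hplus hminus
  rw [add_sub_cancel] at key
  linarith

theorem pointwiseLipschitz_of_coneMonotone
    {X : Type*} [NormedAddCommGroup X] [NormedSpace ℝ X] [CompleteSpace X]
    (K : Set X) (hKclosed : IsClosed K) (hKconv : Convex ℝ K)
    (hKcone : ∀ x ∈ K, ∀ c : ℝ, 0 ≤ c → c • x ∈ K)
    (v : X) (hvint : v ∈ interior K) (hv : ‖v‖ = 1)
    (hball : ∀ h : X, ‖h‖ < 1 → v + h ∈ K)
    (f : X → ℝ) (hf : ∀ x y : X, y - x ∈ K → f x ≤ f y)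
    (x : X)
    (hx : ∃ C : ℝ, ∃ δ > (0:ℝ), ∀ t : ℝ, |t| < δ → |f (x + t • v) - f x| ≤ C * |t|) :
    ∃ C' : ℝ, ∃ δ' > (0:ℝ), ∀ y : X, ‖y - x‖ < δ' → |f y - f x| ≤ C' * ‖y - x‖ :=
  pointwiseLipschitz_of_coneMonotone_general K hKcone v hball f hf x hx
end

section
/- Let X be a Banach space, v a unit vector, x* ∈ X* with ‖x*‖ = x*(v) = 1, α ∈ (0,1), and K = {x : α‖x‖ ≤ x*(x)}. If f : X → ℝ is K-increasing and ε ∈ (0,1) is sufficiently small (depending on α), then for every map φ : ℝ → X such that t ↦ φ(t) − t·v has Lipschitz constant less than ε, the composition f ∘ φ : ℝ → ℝ is monotone nondecreasing. -/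
open Metric

theorem comp_monotone_of_coneIncreasing
    {X : Type*} [NormedAddCommGroup X] [NormedSpace ℝ X] [CompleteSpace X]
    (v : X) (hv : ‖v‖ = 1) (x' : X →L[ℝ] ℝ) (hx' : ‖x'‖ = 1) (hxv : x' v = 1)
    (α : ℝ) (hα : α ∈ Set.Ioo (0:ℝ) 1) :
    ∃ ε ∈ Set.Ioo (0:ℝ) 1,
      ∀ f : X → ℝ, (∀ x y : X, α * ‖y - x‖ ≤ x' (y - x) → f x ≤ f y) →
      ∀ φ : ℝ → X,
        (∃ c : ℝ, c < ε ∧ ∀ s t : ℝ, ‖(φ t - t • v) - (φ s - s • v)‖ ≤ c * |t - s|) →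
        Monotone (f ∘ φ) := by
  obtain ⟨hα0, hα1⟩ := hα
  refine ⟨(1 - α) / (1 + α), ⟨div_pos (by linarith) (by linarith), ?_⟩, ?_⟩
  · rw [div_lt_one (by linarith)]; linarith
  intro f hf φ ⟨c, hc, hφ⟩ s t hst
  have hc0 : 0 ≤ c := by
    have := le_trans (norm_nonneg _) (hφ 0 1)
    simpa using this
  have hc' : α * (1 + c) ≤ 1 - c := by
    rw [lt_div_iff₀ (by linarith : (0:ℝ) < 1 + α)] at hc 
    nlinarith
  simp only [Function.comp_apply]
  apply hf
  set w := (φ t - t • v) - (φ s - s • v) with hw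
  have hwn : ‖w‖ ≤ c * (t - s) := by
    have := hφ s t
    rwa [abs_of_nonneg (by linarith)] at this
  have hdiff : φ t - φ s = (t - s) • v + w := by
    rw [hw]; module
  have hxw : |x' w| ≤ c * (t - s) := by
    calc |x' w| ≤ ‖x'‖ * ‖w‖ := x'.le_opNorm w
    _ = ‖w‖ := by rw [hx', one_mul]
    _ ≤ c * (t - s) := hwn
  have h1 : ‖φ t - φ s‖ ≤ (1 + c) * (t - s) := by
    rw [hdiff]
    calc ‖(t - s) • v + w‖ ≤ ‖(t - s) • v‖ + ‖w‖ := norm_add_le _ _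
    _ = (t - s) + ‖w‖ := by
        rw [norm_smul, hv, mul_one, Real.norm_eq_abs, abs_of_nonneg (by linarith)]
    _ ≤ (t - s) + c * (t - s) := by linarith
    _ = (1 + c) * (t - s) := by ring
  have h2 : (1 - c) * (t - s) ≤ x' (φ t - φ s) := by
    rw [hdiff]
    have : x' ((t - s) • v + w) = (t - s) + x' w := by
      rw [map_add, map_smul, hxv]; simp
    rw [this]
    have := neg_abs_le (x' w)
    nlinarith
  calc α * ‖φ t - φ s‖ ≤ α * ((1 + c) * (t - s)) := by
        exact mul_le_mul_of_nonneg_left h1 (le_of_lt hα0)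
  _ = (α * (1 + c)) * (t - s) := by ring
  _ ≤ (1 - c) * (t - s) := mul_le_mul_of_nonneg_right hc' (by linarith)
  _ ≤ x' (φ t - φ s) := h2
end

section
/- Let X be a separable Banach space, Y a Banach space, G ⊂ X closed, and f : X → Y with ‖f(x)−f(y)‖ ≤ L‖x−y‖ whenever y ∈ G, ‖x−y‖ < δ. Let x ∈ G be a point where the distance function d_G is Gâteaux differentiable, and let 0 ≠ v ∈ X, K := O(f,x,v) > 0. If φ : ℝ → X satisfies φ(r) = x and t ↦ φ(t) − tv has Lipschitz constant strictly less than K/(8L), then O(f∘φ, r, 1) ≥ K/4 > 0; in particular f∘φ is not differentiable at r. -/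
open Metric Topology Filter
open scoped ENNReal NNReal

/-- The oscillation `O(f,x,v)` of Preiss–Zajíček, computed in `ℝ≥0∞`. -/
noncomputable def oscDir {X Y : Type*} [NormedAddCommGroup X] [NormedSpace ℝ X]
    [NormedAddCommGroup Y] [NormedSpace ℝ Y] (f : X → Y) (x v : X) : ℝ≥0∞ :=
  ⨅ (ε : ℝ) (_ : 0 < ε),
    ⨆ (t : ℝ) (s : ℝ) (_ : 0 < |t| ∧ |t| < ε ∧ 0 < |s| ∧ |s| < ε),
      (‖t⁻¹ • (f (x + t • v) - f x) - s⁻¹ • (f (x + s • v) - f x)‖₊ : ℝ≥0∞)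

/-- `g : X → ℝ` is Gâteaux differentiable at `x`. -/
def GateauxDiffAt {X : Type*} [NormedAddCommGroup X] [NormedSpace ℝ X]
    (g : X → ℝ) (x : X) : Prop :=
  ∃ T : X →L[ℝ] ℝ, ∀ u : X,
    Tendsto (fun t : ℝ => t⁻¹ * (g (x + t • u) - g x)) (𝓝[≠] 0) (𝓝 (T u))


/-! Since `d_G ≥ 0` vanishes at `x ∈ G`, its Gâteaux derivative there is zero, so `x + t v` lies
within `o(|t|)` of a point of `G`. As `φ (r + t)` is within `c |t|` of `x + t v`, the Lipschitz
bound of `f` near that point of `G` makes `f (φ (r + t))` and `f (x + t v)` differ by at most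
`(L c + o(1)) |t|`. Hence the difference quotients of `f ∘ φ` at `r` and of `f` at `x` in direction
`v` differ by at most `L c + o(1)`, and the oscillations by at most `2 L c < K / 4`. -/

section Oscillation

variable {X X' Y : Type*} [NormedAddCommGroup X] [NormedSpace ℝ X]
  [NormedAddCommGroup X'] [NormedSpace ℝ X'] [NormedAddCommGroup Y] [NormedSpace ℝ Y]

theorem oscDir_le_oscDir_add {f : X → Y} {g : X' → Y} {x v : X} {x' v' : X'} {C : ℝ}
    (hfg : f x = g x')
    (h : ∀ᶠ t in 𝓝[≠] (0 : ℝ), ‖f (x + t • v) - g (x' + t • v')‖ ≤ C * |t|) :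
    oscDir f x v ≤ oscDir g x' v' + ENNReal.ofReal (2 * C) := by
  set Qf : ℝ → Y := fun t => t⁻¹ • (f (x + t • v) - f x)
  set Qg : ℝ → Y := fun t => t⁻¹ • (g (x' + t • v') - g x')
  obtain ⟨ε₀, hε₀, hε₀h⟩ := Metric.mem_nhdsWithin_iff.mp h
  have hQ : ∀ t, 0 < |t| → |t| < ε₀ → dist (Qf t) (Qg t) ≤ C := by
    intro t ht htε
    have hbound : ‖f (x + t • v) - g (x' + t • v')‖ ≤ C * |t| :=
      hε₀h ⟨by simpa [Real.dist_eq] using htε, abs_pos.mp ht⟩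
    calc dist (Qf t) (Qg t) = |t|⁻¹ * ‖f (x + t • v) - g (x' + t • v')‖ := by
          simp only [Qf, Qg, dist_eq_norm, hfg, ← smul_sub, sub_sub_sub_cancel_right, norm_smul,
            norm_inv, Real.norm_eq_abs]
      _ ≤ |t|⁻¹ * (C * |t|) := by gcongr
      _ = C := by field_simp
  simp only [oscDir, ENNReal.iInf_add]
  refine le_iInf₂ fun ε hε => (iInf₂_le (min ε ε₀) (lt_min hε hε₀)).trans ?_
  refine iSup_le fun t => iSup_le fun s => iSup_le fun ⟨ht, htε', hs, hsε'⟩ => ?_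
  have htε : |t| < ε := htε'.trans_le (min_le_left _ _)
  have hsε : |s| < ε := hsε'.trans_le (min_le_left _ _)
  have hdist : dist (Qf t) (Qf s) ≤ dist (Qg t) (Qg s) + 2 * C := by
    have := dist_triangle4 (Qf t) (Qg t) (Qg s) (Qf s)
    rw [dist_comm (Qg s)] at this
    linarith [hQ t ht (htε'.trans_le (min_le_right _ _)),
      hQ s hs (hsε'.trans_le (min_le_right _ _))]
  rw [← nndist_eq_nnnorm, ← edist_nndist, edist_dist]
  calc ENNReal.ofReal (dist (Qf t) (Qf s))
      ≤ ENNReal.ofReal (dist (Qg t) (Qg s)) + ENNReal.ofReal (2 * C) :=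
        (ENNReal.ofReal_le_ofReal hdist).trans ENNReal.ofReal_add_le
    _ ≤ (⨆ (t : ℝ) (s : ℝ) (_ : 0 < |t| ∧ |t| < ε ∧ 0 < |s| ∧ |s| < ε),
          (‖Qg t - Qg s‖₊ : ℝ≥0∞)) + ENNReal.ofReal (2 * C) := by
        rw [← edist_dist, edist_nndist, nndist_eq_nnnorm]
        gcongr
        exact le_iSup₂_of_le t s (le_iSup_of_le ⟨ht, htε, hs, hsε⟩ le_rfl)

end Oscillation

theorem ENNReal.le_add_ofReal_of_forall_pos {a b : ℝ≥0∞} {F : ℝ → ℝ} (hF : ContinuousAt F 0)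
    (h : ∀ θ > 0, a ≤ b + ENNReal.ofReal (F θ)) : a ≤ b + ENNReal.ofReal (F 0) := by
  have hlim : Tendsto (fun θ => b + ENNReal.ofReal (F θ)) (𝓝 0) (𝓝 (b + ENNReal.ofReal (F 0))) :=
    tendsto_const_nhds.add (ENNReal.continuous_ofReal.continuousAt.tendsto.comp hF)
  exact ge_of_tendsto (hlim.mono_left nhdsWithin_le_nhds)
    (eventually_nhdsWithin_of_forall (s := Set.Ioi 0) h)

theorem oscDir_eq_zero_of_differentiableAt {Y : Type*} [NormedAddCommGroup Y] [NormedSpace ℝ Y]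
    {g : ℝ → Y} {r : ℝ} (hg : DifferentiableAt ℝ g r) : oscDir g r 1 = 0 := by
  set d := deriv g r
  have hline : oscDir (fun t => g r + (t - r) • d) r 1 = 0 := by
    refine le_antisymm ((iInf₂_le 1 one_pos).trans ?_) zero_le
    refine iSup_le fun t => iSup_le fun s => iSup_le fun hts => ?_
    obtain ⟨ht, -, hs, -⟩ := hts
    simp [smul_smul, inv_mul_cancel₀ (abs_pos.mp ht), inv_mul_cancel₀ (abs_pos.mp hs)]
  have hle : ∀ ε > 0, oscDir g r 1 ≤ oscDir (fun t => g r + (t - r) • d) r 1 +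
      ENNReal.ofReal (2 * ε) := fun ε hε => by
    refine oscDir_le_oscDir_add (by simp) ?_
    have := (hasDerivAt_iff_isLittleO_nhds_zero.mp hg.hasDerivAt).bound hε
    filter_upwards [nhdsWithin_le_nhds this] with t ht
    simpa [sub_sub, Real.norm_eq_abs] using ht
  simpa [hline] using ENNReal.le_add_ofReal_of_forall_pos (by fun_prop) hle

theorem GateauxDiffAt.hasDerivAt_line_zero_of_isLocalMin {X : Type*} [NormedAddCommGroup X]
    [NormedSpace ℝ X] {g : X → ℝ} {x : X} (hg : GateauxDiffAt g x) (hmin : IsLocalMin g x)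
    (u : X) : HasDerivAt (fun t : ℝ => g (x + t • u)) 0 0 := by
  obtain ⟨T, hT⟩ := hg
  have hderiv : HasDerivAt (fun t : ℝ => g (x + t • u)) (T u) 0 := by
    rw [hasDerivAt_iff_tendsto_slope_zero]
    simpa using hT u
  have hmin' : IsLocalMin (fun t : ℝ => g (x + t • u)) 0 :=
    IsLocalMin.comp_continuous (g := fun t : ℝ => x + t • u) (by simpa using hmin) (by fun_prop)
  exact hmin'.hasDerivAt_eq_zero hderiv ▸ hderiv

section LipschitzNearSet

variable {X Y : Type*} [NormedAddCommGroup X] [NormedAddCommGroup Y] {G : Set X} {f : X → Y}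
  {L δ : ℝ}

theorem norm_sub_le_of_infDist_lt (hL : 0 ≤ L)
    (hf : ∀ y ∈ G, ∀ x : X, ‖x - y‖ < δ → ‖f x - f y‖ ≤ L * ‖x - y‖) (hG : G.Nonempty)
    {a b : X} {ρ : ℝ} (ha : infDist a G < ρ) (hab : ‖a - b‖ + ρ < δ) :
    ‖f a - f b‖ ≤ L * (‖a - b‖ + 2 * ρ) := by
  obtain ⟨y, hyG, hay⟩ := (infDist_lt_iff hG).mp ha
  rw [dist_eq_norm] at hay
  have hby : ‖b - y‖ < ‖a - b‖ + ρ := by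
    calc ‖b - y‖ ≤ ‖b - a‖ + ‖a - y‖ := norm_sub_le_norm_sub_add_norm_sub _ _ _
      _ < ‖a - b‖ + ρ := by rw [norm_sub_rev]; gcongr
  calc ‖f a - f b‖ ≤ ‖f a - f y‖ + ‖f b - f y‖ := by
        simpa only [dist_eq_norm] using dist_triangle_right (f a) (f b) (f y)
    _ ≤ L * ‖a - y‖ + L * ‖b - y‖ :=
        add_le_add (hf y hyG a (by linarith [norm_nonneg (a - b)])) (hf y hyG b (hby.trans hab))
    _ ≤ L * ρ + L * (‖a - b‖ + ρ) := by gcongr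
    _ = L * (‖a - b‖ + 2 * ρ) := by ring

theorem eventually_norm_sub_comp_le [NormedSpace ℝ X] (hL : 0 ≤ L) (hδ : 0 < δ)
    (hf : ∀ y ∈ G, ∀ x : X, ‖x - y‖ < δ → ‖f x - f y‖ ≤ L * ‖x - y‖) {x v : X} (hx : x ∈ G)
    (hdist : (fun t : ℝ => infDist (x + t • v) G) =o[𝓝 0] fun t => t)
    {φ : ℝ → X} {r : ℝ} {c : ℝ≥0} (hφ : LipschitzWith c fun t => φ t - t • v) (hr : φ r = x)
    {θ : ℝ} (hθ : 0 < θ) :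
    ∀ᶠ t in 𝓝[≠] (0 : ℝ), ‖f (x + t • v) - f (φ (r + t))‖ ≤ L * (c + 4 * θ) * |t| := by
  have hnear : ∀ᶠ t in 𝓝 (0 : ℝ), infDist (x + t • v) G ≤ θ * |t| := by
    simpa [abs_of_nonneg infDist_nonneg] using hdist.bound hθ
  have hsmall : ∀ᶠ t in 𝓝 (0 : ℝ), (c + 2 * θ) * |t| < δ := by
    have hcont : Continuous fun t : ℝ => (c + 2 * θ) * |t| := by fun_prop
    simpa using (hcont.tendsto 0).eventually (gt_mem_nhds (by simpa using hδ))
  filter_upwards [nhdsWithin_le_nhds hnear, nhdsWithin_le_nhds hsmall, self_mem_nhdsWithin]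
    with t hnear hsmall ht
  have ht : 0 < |t| := abs_pos.mpr ht
  have hcurve : ‖x + t • v - φ (r + t)‖ ≤ c * |t| := by
    have := hφ.dist_le_mul (r + t) r
    rwa [dist_eq_norm, Real.dist_eq, add_sub_cancel_left, hr, add_smul, ← norm_neg,
      show -(φ (r + t) - (r • v + t • v) - (x - r • v)) = x + t • v - φ (r + t) by abel] at this
  calc ‖f (x + t • v) - f (φ (r + t))‖
      ≤ L * (‖x + t • v - φ (r + t)‖ + 2 * (2 * θ * |t|)) := by
        refine norm_sub_le_of_infDist_lt hL hf ⟨x, hx⟩ ?_ (by linarith)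
        exact hnear.trans_lt (by nlinarith)
    _ ≤ L * (c * |t| + 2 * (2 * θ * |t|)) := by gcongr
    _ = L * (c + 4 * θ) * |t| := by ring

end LipschitzNearSet

theorem ENNReal.div_four_le_of_le_add {K M B : ℝ≥0∞} (hB : B ≠ ⊤) (hBK : 4 * B ≤ K)
    (h : K ≤ M + B) : K / 4 ≤ M := by
  have hB4 : B ≤ K / 4 := by
    rw [ENNReal.le_div_iff_mul_le (by norm_num) (by norm_num), mul_comm]
    exact hBK
  have hK : K / 4 + B ≤ K :=
    calc K / 4 + B ≤ K / 2 + K / 2 :=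
          add_le_add (ENNReal.div_le_div_left (by norm_num) K)
            (hB4.trans (ENNReal.div_le_div_left (by norm_num) K))
      _ = K := ENNReal.add_halves K
  exact (ENNReal.le_sub_of_add_le_right hB hK).trans (tsub_le_iff_right.mpr h)

theorem comp_not_differentiable_of_osc_pos_general
    {X Y : Type*} [NormedAddCommGroup X] [NormedSpace ℝ X]
    [NormedAddCommGroup Y] [NormedSpace ℝ Y]
    (G : Set X) (f : X → Y) (L δ : ℝ) (hL : 0 < L) (hδ : 0 < δ)
    (hf : ∀ y ∈ G, ∀ x : X, ‖x - y‖ < δ → ‖f x - f y‖ ≤ L * ‖x - y‖)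
    (x : X) (hx : x ∈ G) (hd : GateauxDiffAt (fun z => Metric.infDist z G) x)
    (v : X) (hK : 0 < oscDir f x v)
    (φ : ℝ → X) (r : ℝ) (hr : φ r = x)
    (hlip : ∃ c : ℝ≥0, (c : ℝ≥0∞) < oscDir f x v / (8 * ENNReal.ofReal L) ∧
      LipschitzWith c (fun t : ℝ => φ t - t • v)) :
    oscDir f x v / 4 ≤ oscDir (f ∘ φ) r 1 ∧ ¬ DifferentiableAt ℝ (f ∘ φ) r := by
  obtain ⟨c, hc, hφ⟩ := hlip
  have hmin : IsLocalMin (fun z => infDist z G) x :=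
    Eventually.of_forall fun z => by simpa [infDist_zero_of_mem hx] using infDist_nonneg
  have hdist : (fun t : ℝ => infDist (x + t • v) G) =o[𝓝 0] fun t => t := by
    simpa [infDist_zero_of_mem hx] using
      hasDerivAt_iff_isLittleO_nhds_zero.mp (hd.hasDerivAt_line_zero_of_isLocalMin hmin v)
  have hcompare : ∀ θ > 0,
      oscDir f x v ≤ oscDir (f ∘ φ) r 1 + ENNReal.ofReal (2 * (L * (c + 4 * θ))) := fun θ hθ =>
    oscDir_le_oscDir_add (by simp [hr]) <| by
      simpa using eventually_norm_sub_comp_le hL.le hδ hf hx hdist hφ hr hθ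
  have hle : oscDir f x v ≤ oscDir (f ∘ φ) r 1 + ENNReal.ofReal (2 * (L * c)) := by
    simpa using ENNReal.le_add_ofReal_of_forall_pos (by fun_prop) hcompare
  have hosc : oscDir f x v / 4 ≤ oscDir (f ∘ φ) r 1 := by
    refine ENNReal.div_four_le_of_le_add ENNReal.ofReal_ne_top ?_ hle
    calc 4 * ENNReal.ofReal (2 * (L * c)) = c * (8 * ENNReal.ofReal L) := by
          rw [ENNReal.ofReal_mul (by norm_num), ENNReal.ofReal_mul hL.le,
            ENNReal.ofReal_coe_nnreal, ENNReal.ofReal_ofNat]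
          ring
      _ ≤ oscDir f x v := (ENNReal.mul_lt_of_lt_div hc).le
  refine ⟨hosc, fun hdiff => ?_⟩
  rw [oscDir_eq_zero_of_differentiableAt hdiff, nonpos_iff_eq_zero, ENNReal.div_eq_zero_iff] at hosc
  exact hosc.elim hK.ne' (by norm_num)

theorem comp_not_differentiable_of_osc_pos
    {X Y : Type*} [NormedAddCommGroup X] [NormedSpace ℝ X] [CompleteSpace X]
    [TopologicalSpace.SeparableSpace X]
    [NormedAddCommGroup Y] [NormedSpace ℝ Y] [CompleteSpace Y]
    (G : Set X) (hG : IsClosed G) (f : X → Y) (L δ : ℝ) (hL : 0 < L) (hδ : 0 < δ)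
    (hf : ∀ y ∈ G, ∀ x : X, ‖x - y‖ < δ → ‖f x - f y‖ ≤ L * ‖x - y‖)
    (x : X) (hx : x ∈ G) (hd : GateauxDiffAt (fun z => Metric.infDist z G) x)
    (v : X) (hv : v ≠ 0) (hK : 0 < oscDir f x v)
    (φ : ℝ → X) (r : ℝ) (hr : φ r = x)
    (hlip : ∃ c : ℝ≥0, (c : ℝ≥0∞) < oscDir f x v / (8 * ENNReal.ofReal L) ∧
      LipschitzWith c (fun t : ℝ => φ t - t • v)) :
    oscDir f x v / 4 ≤ oscDir (f ∘ φ) r 1 ∧ ¬ DifferentiableAt ℝ (f ∘ φ) r :=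
  comp_not_differentiable_of_osc_pos_general G f L δ hL hδ hf x hx hd v hK φ r hr hlip
end

section
/- Let X be a Banach space, v a unit vector, x* ∈ X* with ‖x*‖ = x*(v) = 1, and 0 < α < β < 1. Suppose the norm of X is locally uniformly rotund at v. Then there exists β' ∈ (α,1) and η > 0 such that K_{β',x*} ∩ S(0,t) ⊂ B(tv, ηt) ⊂ tv/2 + K_{α,x*} for every t > 0, where K_{γ,x*} = {x : γ‖x‖ ≤ x*(x)} and S(0,t) is the sphere of radius t. -/
open Metric

theorem cone_sphere_inclusions_of_LUR
    {X : Type*} [NormedAddCommGroup X] [NormedSpace ℝ X] [CompleteSpace X]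
    (v : X) (hv : ‖v‖ = 1) (x' : X →L[ℝ] ℝ) (hx' : ‖x'‖ = 1) (hxv : x' v = 1)
    (α β : ℝ) (h0α : 0 < α) (hαβ : α < β) (hβ1 : β < 1)
    (hLUR : ∀ u : ℕ → X, (∀ n, ‖u n‖ = 1) →
      Filter.Tendsto (fun n => ‖u n + v‖) Filter.atTop (nhds 2) →
      Filter.Tendsto u Filter.atTop (nhds v)) :
    ∃ β' ∈ Set.Ioo α 1, ∃ η > (0:ℝ), ∀ t > (0:ℝ),
      ({x : X | β' * ‖x‖ ≤ x' x} ∩ Metric.sphere (0:X) t ⊆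
        Metric.ball (t • v) (η * t)) ∧
      (Metric.ball (t • v) (η * t) ⊆
        {y : X | α * ‖y - (t / 2) • v‖ ≤ x' (y - (t / 2) • v)}) := by
  have hα1 : α < 1 := lt_trans hαβ hβ1
  have hbound : ∀ w : X, x' w ≤ ‖w‖ := by
    intro w
    calc x' w ≤ |x' w| := le_abs_self _
      _ = ‖x' w‖ := rfl
      _ ≤ ‖x'‖ * ‖w‖ := x'.le_opNorm w
      _ = ‖w‖ := by rw [hx', one_mul]
  have hboundlow : ∀ w : X, -‖w‖ ≤ x' w := by
    intro w
    have := hbound (-w)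
    simp only [map_neg, norm_neg] at this
    linarith
  set η : ℝ := (1 - α) / (4 * (1 + α)) with hηdef
  have hη : 0 < η := by
    apply div_pos <;> nlinarith
  -- key lemma from LUR
  have key : ∃ δ : ℝ, 0 < δ ∧ ∀ u : X, ‖u‖ = 1 → 1 - δ ≤ x' u → ‖u - v‖ < η := by
    by_contra hc
    push_neg at hc
    choose u hu1 hu2 hu3 using fun n : ℕ =>
      hc (1 / (n + 1)) (by positivity)
    have hup : Filter.Tendsto u Filter.atTop (nhds v) := by
      apply hLUR u hu1
      refine tendsto_of_tendsto_of_tendsto_of_le_of_le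
        (g := fun n : ℕ => 2 - 1 / (n + 1 : ℝ)) (h := fun _ : ℕ => (2:ℝ)) ?_ ?_ ?_ ?_
      · have h0 : Filter.Tendsto (fun n : ℕ => 1 / (n + 1 : ℝ)) Filter.atTop (nhds 0) :=
          tendsto_one_div_add_atTop_nhds_zero_nat
        have := (tendsto_const_nhds (x := (2:ℝ)) (f := Filter.atTop (α := ℕ))).sub h0
        simpa using this
      · exact tendsto_const_nhds
      · intro n
        have h1 : x' (u n + v) ≤ ‖u n + v‖ := hbound _
        have h2 : x' (u n + v) = x' (u n) + 1 := by rw [map_add, hxv]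
        have := hu2 n
        linarith
      · intro n
        calc ‖u n + v‖ ≤ ‖u n‖ + ‖v‖ := norm_add_le _ _
          _ = 2 := by rw [hu1 n, hv]; norm_num
    rw [Metric.tendsto_atTop] at hup
    obtain ⟨N, hN⟩ := hup η hη
    have := hN N le_rfl
    rw [dist_eq_norm] at this
    exact absurd this (not_lt.mpr (hu3 N))
  obtain ⟨δ, hδ, hkey⟩ := key
  refine ⟨max ((α + 1) / 2) (1 - δ), ⟨?_, ?_⟩, η, hη, ?_⟩
  · exact lt_max_of_lt_left (by linarith)
  · exact max_lt (by linarith) (by linarith)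
  intro t ht
  constructor
  · rintro x ⟨hx1, hx2⟩
    simp only [mem_sphere_iff_norm, sub_zero] at hx2
    have hxt : ‖x‖ = t := hx2
    set u0 : X := t⁻¹ • x with hu0def
    have hu0 : ‖u0‖ = 1 := by
      rw [hu0def, norm_smul, norm_inv, Real.norm_eq_abs, abs_of_pos ht, hxt,
        inv_mul_cancel₀ ht.ne']
    have hx1' : max ((α + 1) / 2) (1 - δ) * ‖x‖ ≤ x' x := hx1
    have hβ'le : (1 - δ) * t ≤ x' x := by
      calc (1 - δ) * t ≤ max ((α + 1) / 2) (1 - δ) * t := by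
            apply mul_le_mul_of_nonneg_right (le_max_right _ _) ht.le
        _ ≤ x' x := by rw [← hxt]; exact hx1'
    have hu0x' : 1 - δ ≤ x' u0 := by
      rw [hu0def, map_smul, smul_eq_mul]
      calc 1 - δ = t⁻¹ * ((1 - δ) * t) := by field_simp
        _ ≤ t⁻¹ * x' x := mul_le_mul_of_nonneg_left hβ'le (by positivity)
    have hclose := hkey u0 hu0 hu0x'
    rw [Metric.mem_ball, dist_eq_norm]
    have : x - t • v = t • (u0 - v) := by
      rw [hu0def, smul_sub, smul_inv_smul₀ ht.ne']
    rw [this, norm_smul, Real.norm_eq_abs, abs_of_pos ht]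
    calc t * ‖u0 - v‖ < t * η := by exact (mul_lt_mul_iff_right₀ ht).mpr hclose
      _ = η * t := mul_comm _ _
  · intro y hy
    rw [Metric.mem_ball, dist_eq_norm] at hy
    simp only [Set.mem_setOf_eq]
    have h1 : x' (y - t • v) ≥ -‖y - t • v‖ := hboundlow _
    have h2 : x' (y - (t / 2) • v) = x' (y - t • v) + t / 2 := by
      rw [map_sub, map_sub, map_smul, map_smul, hxv]
      simp only [smul_eq_mul, mul_one]
      ring
    have h3 : ‖y - (t / 2) • v‖ ≤ ‖y - t • v‖ + t / 2 := by
      have : y - (t / 2) • v = (y - t • v) + (t / 2) • v := by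
        module
      rw [this]
      calc ‖(y - t • v) + (t / 2) • v‖ ≤ ‖y - t • v‖ + ‖(t / 2) • v‖ := norm_add_le _ _
        _ = ‖y - t • v‖ + t / 2 := by
            rw [norm_smul, Real.norm_eq_abs, abs_of_pos (by linarith), hv, mul_one]
    have hηt : ‖y - t • v‖ < η * t := hy
    have hηval : η * (1 + α) ≤ (1 - α) / 2 := by
      rw [hηdef, div_mul_eq_mul_div, div_le_div_iff₀ (by nlinarith) (by norm_num)]
      nlinarith
    have hnn : 0 ≤ ‖y - t • v‖ := norm_nonneg _
    calc α * ‖y - (t / 2) • v‖ ≤ α * (‖y - t • v‖ + t / 2) := by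
          exact mul_le_mul_of_nonneg_left h3 h0α.le
      _ ≤ x' (y - (t / 2) • v) := by
          rw [h2]
          nlinarith [mul_lt_mul_of_pos_right hηt (show (0:ℝ) < 1 + α by linarith)]
end

section
/- Let X be a separable Banach space, K = {x ∈ X : α‖x‖ ≤ x*(x)} with ‖x*‖ = x*(v) = 1, ‖v‖ = 1, α ∈ (0,1), and let f : X → ℝ be K-increasing. Define B = {x ∈ X : limsup_{t→0} |f(x+tv)−f(x)|/|t| = ∞}. Then there exists ε > 0 such that for every curve φ : ℝ → X with t ↦ φ(t)−tv having Lipschitz constant less than ε, the set {r ∈ ℝ : φ(r) ∈ B} has Lebesgue measure zero. -/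
/-!
Write `φ r = r • v + ψ r` with `ψ` `c`-Lipschitz. Then `φ (r + s) - (φ r + t • v)` is
`(s - t) • v` up to an error of norm at most `c |s|`, so for small `c` it lies in the cone
`K = {z | α ‖z‖ ≤ x' z}` as soon as `s - t` dominates `|s|`. Hence `f ∘ φ` is monotone, so it is
differentiable almost everywhere, and at a point `r` of differentiability
`f (φ r + t • v)` is squeezed between `(f ∘ φ) (r + t - |t|)` and `(f ∘ φ) (r + t + |t|)`.
Both are `f (φ r) + O(t)`, so `φ r` is not in the bad set.
-/

open MeasureTheory Asymptotics Filter Topology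

theorem DifferentiableAt.isBigO_sub_of_le_of_le {g h a b : ℝ → ℝ} {r : ℝ}
    (hg : DifferentiableAt ℝ g r) (ha : a =O[𝓝 0] id) (hb : b =O[𝓝 0] id)
    (hlow : ∀ t, g (r + a t) ≤ h t) (hup : ∀ t, h t ≤ g (r + b t)) :
    (fun t => h t - g r) =O[𝓝 0] id := by
  have hcomp : ∀ c : ℝ → ℝ, c =O[𝓝 0] id → (fun t => g (r + c t) - g r) =O[𝓝 0] id := by
    intro c hc
    have hlim : Tendsto (fun t => r + c t) (𝓝 0) (𝓝 r) := by
      simpa using (hc.trans_tendsto tendsto_id).const_add r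
    have hO := hg.isBigO_sub.comp_tendsto hlim
    simp only [Function.comp_def, add_sub_cancel_left] at hO
    exact hO.trans hc
  refine (isBigO_of_le _ fun t => ?_).trans ((hcomp a ha).norm_left.add (hcomp b hb).norm_left)
  have h₁ := hlow t
  have h₂ := hup t
  simp only [Real.norm_eq_abs]
  rw [abs_of_nonneg (add_nonneg (abs_nonneg (g (r + a t) - g r)) (abs_nonneg _)), abs_le]
  constructor <;> linarith [neg_abs_le (g (r + a t) - g r), le_abs_self (g (r + b t) - g r),
    abs_nonneg (g (r + a t) - g r), abs_nonneg (g (r + b t) - g r)]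

theorem Asymptotics.IsBigO.exists_abs_le_mul {u : ℝ → ℝ} (hu : u =O[𝓝 0] id) :
    ∃ C, ∃ δ > 0, ∀ t, |t| < δ → |u t| ≤ C * |t| := by
  obtain ⟨C, hC⟩ := hu.bound
  obtain ⟨δ, hδ, hball⟩ := Metric.eventually_nhds_iff.mp hC
  exact ⟨C, δ, hδ, fun t ht => hball (by simpa using ht)⟩

section LipschitzPerturbation

variable {X : Type*} [NormedAddCommGroup X] [NormedSpace ℝ X]
  {v : X} {x' : X →L[ℝ] ℝ} {α : ℝ}

theorem mul_norm_smul_add_le_apply (hv : ‖v‖ ≤ 1) (hx' : ‖x'‖ ≤ 1) (hxv : x' v = 1)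
    (hα₀ : 0 ≤ α) (hα₁ : α < 1) {a : ℝ} {w : X} (h : (1 + α) * ‖w‖ ≤ (1 - α) * a) :
    α * ‖a • v + w‖ ≤ x' (a • v + w) := by
  have ha : 0 ≤ a := by nlinarith [norm_nonneg w]
  have hnorm : ‖a • v + w‖ ≤ a + ‖w‖ :=
    calc ‖a • v + w‖ ≤ ‖a • v‖ + ‖w‖ := norm_add_le _ _
      _ = a * ‖v‖ + ‖w‖ := by rw [norm_smul, Real.norm_of_nonneg ha]
      _ ≤ a + ‖w‖ := by nlinarith
  have hw : -‖w‖ ≤ x' w :=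
    neg_le_of_abs_le ((x'.le_opNorm w).trans (mul_le_of_le_one_left (norm_nonneg w) hx'))
  have hval : x' (a • v + w) = a + x' w := by simp [hxv]
  rw [hval]
  nlinarith [mul_le_mul_of_nonneg_left hnorm hα₀]

variable {f : X → ℝ} (hv : ‖v‖ ≤ 1) (hx' : ‖x'‖ ≤ 1) (hxv : x' v = 1)
  (hα₀ : 0 ≤ α) (hα₁ : α < 1) (hf : ∀ x y : X, α * ‖y - x‖ ≤ x' (y - x) → f x ≤ f y)
  {φ : ℝ → X} {c : ℝ} (hφ : ∀ s t : ℝ, ‖(φ t - t • v) - (φ s - s • v)‖ ≤ c * |t - s|)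
include hv hx' hxv hα₀ hα₁ hf hφ

theorem le_comp_of_lipschitz_perturbation {r s t : ℝ}
    (h : (1 + α) * c * |s| ≤ (1 - α) * (s - t)) :
    f (φ r + t • v) ≤ f (φ (r + s)) := by
  set w := (φ (r + s) - (r + s) • v) - (φ r - r • v)
  have hw : ‖w‖ ≤ c * |s| := by simpa using hφ r (r + s)
  have hdiff : φ (r + s) - (φ r + t • v) = (s - t) • v + w := by simp only [w]; module
  apply hf
  rw [hdiff]
  exact mul_norm_smul_add_le_apply hv hx' hxv hα₀ hα₁ (by nlinarith)

theorem comp_le_of_lipschitz_perturbation {r s t : ℝ}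
    (h : (1 + α) * c * |s| ≤ (1 - α) * (t - s)) :
    f (φ (r + s)) ≤ f (φ r + t • v) := by
  set w := (φ r - r • v) - (φ (r + s) - (r + s) • v)
  have hw : ‖w‖ ≤ c * |s| := by simpa [w, norm_sub_rev] using hφ r (r + s)
  have hdiff : φ r + t • v - φ (r + s) = (t - s) • v + w := by simp only [w]; module
  apply hf
  rw [hdiff]
  exact mul_norm_smul_add_le_apply hv hx' hxv hα₀ hα₁ (by nlinarith)

theorem monotone_comp_of_lipschitz_perturbation (hc : (1 + α) * c ≤ 1 - α) :
    Monotone (f ∘ φ) := by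
  intro r r' hrr'
  have hs : 0 ≤ r' - r := sub_nonneg.mpr hrr'
  have := le_comp_of_lipschitz_perturbation hv hx' hxv hα₀ hα₁ hf hφ (r := r) (s := r' - r) (t := 0)
    (by rw [abs_of_nonneg hs]; nlinarith)
  simpa using this

theorem comp_le_le_comp_of_lipschitz_perturbation (hc : 2 * (1 + α) * c ≤ 1 - α) (r t : ℝ) :
    f (φ (r + (t - |t|))) ≤ f (φ r + t • v) ∧ f (φ r + t • v) ≤ f (φ (r + (t + |t|))) := by
  have hc₀ : 0 ≤ c := (norm_nonneg _).trans (by simpa using hφ 0 1)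
  have hbound : ∀ s, |s| ≤ 2 * |t| → (1 + α) * c * |s| ≤ (1 - α) * |t| := fun s hs => by
    nlinarith [abs_nonneg t, mul_le_mul_of_nonneg_left hs (by positivity : 0 ≤ (1 + α) * c)]
  have habs_add : ∀ s, |s| ≤ |t| → |t + s| ≤ 2 * |t| := fun s hs => by
    linarith [abs_add_le t s]
  constructor
  · apply comp_le_of_lipschitz_perturbation hv hx' hxv hα₀ hα₁ hf hφ
    have := hbound _ (habs_add (-|t|) (by simp))
    rw [← sub_eq_add_neg] at this
    linarith
  · apply le_comp_of_lipschitz_perturbation hv hx' hxv hα₀ hα₁ hf hφ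
    have := hbound _ (habs_add |t| (by simp))
    linarith

end LipschitzPerturbation

theorem bad_set_null_along_curves_general
    {X : Type*} [NormedAddCommGroup X] [NormedSpace ℝ X]
    (v : X) (hv : ‖v‖ = 1) (x' : X →L[ℝ] ℝ) (hx' : ‖x'‖ = 1) (hxv : x' v = 1)
    (α : ℝ) (hα : α ∈ Set.Ioo (0:ℝ) 1)
    (f : X → ℝ) (hf : ∀ x y : X, α * ‖y - x‖ ≤ x' (y - x) → f x ≤ f y) :
    ∃ ε > (0:ℝ), ∀ φ : ℝ → X,
      (∃ c : ℝ, c < ε ∧ ∀ s t : ℝ, ‖(φ t - t • v) - (φ s - s • v)‖ ≤ c * |t - s|) →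
      volume {r : ℝ | φ r ∈ {x : X | ∀ C : ℝ, ∀ δ > (0:ℝ),
        ∃ t : ℝ, |t| < δ ∧ C * |t| < |f (x + t • v) - f x|}} = 0 := by
  obtain ⟨hα₀, hα₁⟩ := hα
  refine ⟨(1 - α) / (2 * (1 + α)), div_pos (by linarith) (by linarith), ?_⟩
  rintro φ ⟨c, hcε, hφ⟩
  have hc : 2 * (1 + α) * c ≤ 1 - α := by
    rw [lt_div_iff₀ (by linarith)] at hcε
    linarith
  have hmono := monotone_comp_of_lipschitz_perturbation hv.le hx'.le hxv hα₀.le hα₁ hf hφ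
    (by nlinarith)
  refine measure_mono_null ?_ (ae_iff.mp hmono.ae_differentiableAt)
  intro r hr hdiff
  have hsandwich := comp_le_le_comp_of_lipschitz_perturbation hv.le hx'.le hxv hα₀.le hα₁ hf hφ hc r
  have hbigO := hdiff.isBigO_sub_of_le_of_le
    ((isBigO_refl _ _).sub (isBigO_abs_left.mpr (isBigO_refl _ _)))
    ((isBigO_refl _ _).add (isBigO_abs_left.mpr (isBigO_refl _ _)))
    (fun t => (hsandwich t).1) (fun t => (hsandwich t).2)
  obtain ⟨C, δ, hδ, hC⟩ := hbigO.exists_abs_le_mul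
  obtain ⟨t, ht, hlt⟩ := hr C δ hδ
  exact hlt.not_ge (hC t ht)

theorem bad_set_null_along_curves
    {X : Type*} [NormedAddCommGroup X] [NormedSpace ℝ X] [CompleteSpace X]
    [TopologicalSpace.SeparableSpace X]
    (v : X) (hv : ‖v‖ = 1) (x' : X →L[ℝ] ℝ) (hx' : ‖x'‖ = 1) (hxv : x' v = 1)
    (hLUR : ∀ u : ℕ → X, (∀ n, ‖u n‖ = 1) →
      Filter.Tendsto (fun n => ‖u n + v‖) Filter.atTop (nhds 2) →
      Filter.Tendsto u Filter.atTop (nhds v))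
    (α : ℝ) (hα : α ∈ Set.Ioo (0:ℝ) 1)
    (f : X → ℝ) (hf : ∀ x y : X, α * ‖y - x‖ ≤ x' (y - x) → f x ≤ f y) :
    ∃ ε > (0:ℝ), ∀ φ : ℝ → X,
      (∃ c : ℝ, c < ε ∧ ∀ s t : ℝ, ‖(φ t - t • v) - (φ s - s • v)‖ ≤ c * |t - s|) →
      volume {r : ℝ | φ r ∈ {x : X | ∀ C : ℝ, ∀ δ > (0:ℝ),
        ∃ t : ℝ, |t| < δ ∧ C * |t| < |f (x + t • v) - f x|}} = 0 :=
  bad_set_null_along_curves_general v hv x' hx' hxv α hα f hf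
end

section
/- Let X, Y be Banach spaces, G ⊂ X, f : X → Y, L, δ > 0 with ‖f(x)−f(y)‖ ≤ L‖x−y‖ whenever y ∈ G, ‖x−y‖ < δ. Let x ∈ G be a point where d_G is Gâteaux differentiable, let 0 ≠ v ∈ X, and suppose the directional derivative f'(x,v) exists. Then f'(x,v) lies in the closed linear span of f(G ∩ B(x, δ/2)). -/
/-!
Since `x ∈ G`, the function `t ↦ d_G (x + t • v)` is nonnegative and vanishes at `t = 0`, so by
Fermat's rule its derivative there is `0`, i.e. `d_G (x + t • v) = o(t)`. Choosing `w t ∈ G` with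
`‖x + t • v - w t‖ = o(t)`, the Lipschitz bound near `G` gives `t⁻¹ • (f (x + t • v) - f (w t)) → 0`,
so the quotients `t⁻¹ • (f (w t) - f x)`, which lie in the span of `f '' (G ∩ ball x r)` for small
`t`, converge to `y`.
-/

open Metric Topology Filter

section

variable {X Y : Type*} [NormedAddCommGroup X] [NormedSpace ℝ X]
  [NormedAddCommGroup Y] [NormedSpace ℝ Y]

theorem eq_zero_of_tendsto_slope_infDist {G : Set X} {x : X} (hx : x ∈ G) (u : X) {c : ℝ}
    (h : Tendsto (fun t : ℝ => t⁻¹ * (infDist (x + t • u) G - infDist x G)) (𝓝[≠] 0) (𝓝 c)) :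
    c = 0 := by
  have hderiv : HasDerivAt (fun t : ℝ => infDist (x + t • u) G) c 0 := by
    rw [hasDerivAt_iff_tendsto_slope_zero]
    simpa using h
  refine IsLocalMin.hasDerivAt_eq_zero (Filter.Eventually.of_forall fun t => ?_) hderiv
  simpa [infDist_zero_of_mem hx] using infDist_nonneg

theorem tendsto_nhdsNE_zero_of_tendsto_inv_smul {E : Type*} [NormedAddCommGroup E]
    [NormedSpace ℝ E] {g : ℝ → E} (h : Tendsto (fun t : ℝ => t⁻¹ • g t) (𝓝[≠] 0) (𝓝 0)) :
    Tendsto g (𝓝[≠] 0) (𝓝 0) := by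
  have hmul : Tendsto (fun t : ℝ => t • t⁻¹ • g t) (𝓝[≠] 0) (𝓝 0) := by
    simpa using (tendsto_nhdsWithin_of_tendsto_nhds tendsto_id).smul h
  refine hmul.congr' (eventually_mem_nhdsWithin.mono fun t (ht : t ≠ 0) => ?_)
  simp [smul_smul, ht]

theorem exists_mem_tendsto_inv_smul_sub {G : Set X} {x : X} (hx : x ∈ G) (v : X)
    (h : Tendsto (fun t : ℝ => t⁻¹ * infDist (x + t • v) G) (𝓝[≠] 0) (𝓝 0)) :
    ∃ w : ℝ → X, (∀ t, w t ∈ G) ∧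
      Tendsto (fun t : ℝ => t⁻¹ • (x + t • v - w t)) (𝓝[≠] 0) (𝓝 0) := by
  -- the slack `t ^ 2` is `o(t)` but positive for `t ≠ 0`
  have hnear : ∀ t : ℝ, ∃ w ∈ G, dist (x + t • v) w ≤ infDist (x + t • v) G + t ^ 2 := by
    intro t
    rcases eq_or_ne t 0 with rfl | ht
    · exact ⟨x, hx, by simp [infDist_zero_of_mem hx]⟩
    obtain ⟨w, hwG, hw⟩ := (infDist_lt_iff ⟨x, hx⟩).1
      (lt_add_of_pos_right (infDist (x + t • v) G) (by positivity : 0 < t ^ 2))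
    exact ⟨w, hwG, hw.le⟩
  choose w hwG hw using hnear
  have hbound : ∀ t : ℝ,
      ‖t⁻¹ • (x + t • v - w t)‖ ≤ |t⁻¹ * infDist (x + t • v) G| + |t| := by
    intro t
    calc ‖t⁻¹ • (x + t • v - w t)‖ = |t|⁻¹ * dist (x + t • v) (w t) := by
          rw [norm_smul, Real.norm_eq_abs, abs_inv, dist_eq_norm]
      _ ≤ |t|⁻¹ * (infDist (x + t • v) G + t ^ 2) := by gcongr; exact hw t
      _ = |t⁻¹ * infDist (x + t • v) G| + |t| := by
          rw [abs_mul, abs_inv, abs_of_nonneg infDist_nonneg, mul_add, ← sq_abs t]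
          rcases eq_or_ne |t| 0 with ht | ht
          · simp [ht]
          · field_simp
  have habs : Tendsto (fun t : ℝ => |t|) (𝓝[≠] 0) (𝓝 0) :=
    tendsto_nhdsWithin_of_tendsto_nhds (by simpa using (continuous_abs.tendsto (0 : ℝ)))
  exact ⟨w, hwG, squeeze_zero_norm hbound (by simpa using h.abs.add habs)⟩

theorem mem_closure_span_image_of_tendsto_slope {G : Set X} {f : X → Y} {L δ r : ℝ}
    (hδ : 0 < δ) (hr : 0 < r)
    (hf : ∀ y ∈ G, ∀ x : X, ‖x - y‖ < δ → ‖f x - f y‖ ≤ L * ‖x - y‖)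
    {x v : X} (hx : x ∈ G)
    (hdist : Tendsto (fun t : ℝ => t⁻¹ * infDist (x + t • v) G) (𝓝[≠] 0) (𝓝 0))
    {y : Y} (hderiv : Tendsto (fun t : ℝ => t⁻¹ • (f (x + t • v) - f x)) (𝓝[≠] 0) (𝓝 y)) :
    y ∈ closure (Submodule.span ℝ (f '' (G ∩ ball x r)) : Set Y) := by
  obtain ⟨w, hwG, hw⟩ := exists_mem_tendsto_inv_smul_sub hx v hdist
  have hgap : Tendsto (fun t : ℝ => x + t • v - w t) (𝓝[≠] 0) (𝓝 0) :=
    tendsto_nhdsNE_zero_of_tendsto_inv_smul hw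
  have hwx : Tendsto w (𝓝[≠] 0) (𝓝 x) := by
    have hline : Tendsto (fun t : ℝ => x + t • v) (𝓝[≠] 0) (𝓝 x) := by
      refine (Continuous.tendsto' ?_ 0 x (by simp)).mono_left nhdsWithin_le_nhds
      fun_prop
    simpa using hline.sub hgap
  have hlip : Tendsto (fun t : ℝ => t⁻¹ • (f (x + t • v) - f (w t))) (𝓝[≠] 0) (𝓝 0) := by
    refine squeeze_zero_norm' ?_ (by simpa using hw.norm.const_mul L)
    filter_upwards [hgap.eventually (ball_mem_nhds 0 hδ)] with t ht
    rw [norm_smul, norm_smul, mul_left_comm]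
    gcongr
    exact hf _ (hwG t) _ (by simpa using ht)
  have hquot : Tendsto (fun t : ℝ => t⁻¹ • (f (w t) - f x)) (𝓝[≠] 0) (𝓝 y) := by
    simpa only [← smul_sub, sub_sub_sub_cancel_left, sub_zero] using hderiv.sub hlip
  refine mem_closure_of_tendsto hquot ?_
  filter_upwards [hwx.eventually (ball_mem_nhds x hr)] with t ht
  exact Submodule.smul_mem _ _ (sub_mem (Submodule.subset_span ⟨w t, ⟨hwG t, ht⟩, rfl⟩)
    (Submodule.subset_span ⟨x, ⟨hx, mem_ball_self hr⟩, rfl⟩))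

end

theorem dirDeriv_mem_closed_span_general
    {X Y : Type*} [NormedAddCommGroup X] [NormedSpace ℝ X]
    [NormedAddCommGroup Y] [NormedSpace ℝ Y]
    (G : Set X) (f : X → Y) (L δ : ℝ) (hδ : 0 < δ)
    (hf : ∀ y ∈ G, ∀ x : X, ‖x - y‖ < δ → ‖f x - f y‖ ≤ L * ‖x - y‖)
    (x : X) (hx : x ∈ G)
    (hd : ∃ T : X →L[ℝ] ℝ, ∀ u : X,
      Tendsto (fun t : ℝ => t⁻¹ * (Metric.infDist (x + t • u) G - Metric.infDist x G))
        (𝓝[≠] 0) (𝓝 (T u)))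
    (v : X) (y : Y)
    (hderiv : Tendsto (fun t : ℝ => t⁻¹ • (f (x + t • v) - f x)) (𝓝[≠] 0) (𝓝 y)) :
    y ∈ closure (Submodule.span ℝ (f '' (G ∩ Metric.ball x (δ / 2))) : Set Y) := by
  obtain ⟨T, hT⟩ := hd
  have hslope := hT v
  rw [eq_zero_of_tendsto_slope_infDist hx v (hT v), infDist_zero_of_mem hx] at hslope
  simp only [sub_zero] at hslope
  exact mem_closure_span_image_of_tendsto_slope hδ (half_pos hδ) hf hx hslope hderiv

theorem dirDeriv_mem_closed_span
    {X Y : Type*} [NormedAddCommGroup X] [NormedSpace ℝ X] [CompleteSpace X]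
    [NormedAddCommGroup Y] [NormedSpace ℝ Y] [CompleteSpace Y]
    (G : Set X) (f : X → Y) (L δ : ℝ) (hL : 0 < L) (hδ : 0 < δ)
    (hf : ∀ y ∈ G, ∀ x : X, ‖x - y‖ < δ → ‖f x - f y‖ ≤ L * ‖x - y‖)
    (x : X) (hx : x ∈ G)
    (hd : ∃ T : X →L[ℝ] ℝ, ∀ u : X,
      Tendsto (fun t : ℝ => t⁻¹ * (Metric.infDist (x + t • u) G - Metric.infDist x G))
        (𝓝[≠] 0) (𝓝 (T u)))
    (v : X) (hv : v ≠ 0) (y : Y)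
    (hderiv : Tendsto (fun t : ℝ => t⁻¹ • (f (x + t • v) - f x)) (𝓝[≠] 0) (𝓝 y)) :
    y ∈ closure (Submodule.span ℝ (f '' (G ∩ Metric.ball x (δ / 2))) : Set Y) :=
  dirDeriv_mem_closed_span_general G f L δ hδ hf x hx hd v y hderiv
end

section
/- Let X be a separable Banach space, Y a Banach space, G ⊂ X closed, f : X → Y with ‖f(x)−f(y)‖ ≤ L‖x−y‖ for y ∈ G, x ∈ B(y,δ), and w ∈ G. Then there exists an L-Lipschitz map H : X → ℓ∞ such that for every x ∈ G ∩ B(w, δ/4) at which d_G is Gâteaux differentiable and every 0 ≠ v ∈ X, O(f,x,v) = O(H,x,v). -/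
open Metric Topology Filter
open scoped ENNReal NNReal

/-!
A sequence of norming functionals embeds the separable span of `f '' S`, where
`S = G ∩ B(w, δ/4)`, linearly and isometrically into `ℓ∞` by some `Φ`; `f` is `L`-Lipschitz on
`S`, so `Φ ∘ f` extends from `S` to an `L`-Lipschitz `H : X → ℓ∞`.

The oscillation `O(f,x,v)` is the limsup, as `s, t → 0`, of the distance between the difference
quotients at `t` and at `s`; it does not change when the quotients are perturbed by `o(1)`.
At `x ∈ G` where `d_G` is Gâteaux differentiable the derivative of `d_G` vanishes (`x` is a
minimum), so `x + t v` lies within `o(|t|)` of some `p t ∈ S`. Replacing `x + t v` by `p t`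
costs `o(1)` in the quotients of `f` and of `H`, and along `p t` the quotients of `H` are the
images under `Φ` of those of `f`, at the same mutual distances.
-/

open scoped lp
open Asymptotics

noncomputable def oscAlong {α E : Type*} [PseudoEMetricSpace E] (q : α → E) (l : Filter α) :
    ℝ≥0∞ :=
  limsup (fun p : α × α => edist (q p.1) (q p.2)) (l ×ˢ l)

section oscAlong

variable {α E : Type*} {l : Filter α}

theorem oscAlong_le_of_tendsto_edist [PseudoEMetricSpace E] {q r : α → E}
    (h : Tendsto (fun a => edist (q a) (r a)) l (𝓝 0)) : oscAlong q l ≤ oscAlong r l := by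
  have hsum : Tendsto (fun p : α × α => edist (q p.1) (r p.1) + edist (q p.2) (r p.2))
      (l ×ˢ l) (𝓝 0) := by
    simpa using (h.comp tendsto_fst).add (h.comp tendsto_snd)
  calc oscAlong q l
      ≤ limsup (fun p : α × α => edist (r p.1) (r p.2) +
          (edist (q p.1) (r p.1) + edist (q p.2) (r p.2))) (l ×ˢ l) := by
        refine limsup_le_limsup (.of_forall fun p => ?_)
        calc edist (q p.1) (q p.2)
            ≤ edist (q p.1) (r p.1) + edist (r p.1) (r p.2) + edist (r p.2) (q p.2) :=
              edist_triangle4 _ _ _ _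
          _ = _ := by rw [edist_comm (r p.2)]; ring
    _ = oscAlong r l := ENNReal.limsup_add_of_right_tendsto_zero hsum _

theorem oscAlong_eq_of_tendsto_edist [PseudoEMetricSpace E] {q r : α → E}
    (h : Tendsto (fun a => edist (q a) (r a)) l (𝓝 0)) : oscAlong q l = oscAlong r l :=
  (oscAlong_le_of_tendsto_edist h).antisymm
    (oscAlong_le_of_tendsto_edist (by simpa only [edist_comm] using h))

theorem Filter.EventuallyEq.oscAlong_eq [PseudoEMetricSpace E] {q r : α → E}
    (h : q =ᶠ[l] r) : oscAlong q l = oscAlong r l :=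
  oscAlong_eq_of_tendsto_edist <| tendsto_const_nhds.congr' <| h.mono fun a ha => by simp [ha]

theorem oscAlong_map_eq {F 𝓕 : Type*} [SeminormedAddCommGroup E] [SeminormedAddCommGroup F]
    [FunLike 𝓕 E F] [AddMonoidHomClass 𝓕 E F] {Φ : 𝓕} {V : AddSubgroup E}
    (hΦ : ∀ z ∈ V, ‖Φ z‖ = ‖z‖) {q : α → E} (hq : ∀ᶠ a in l, q a ∈ V) :
    oscAlong (fun a => Φ (q a)) l = oscAlong q l :=
  limsup_congr <| (hq.prod_mk hq).mono fun _ h => by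
    rw [edist_eq_enorm_sub, edist_eq_enorm_sub, ← map_sub, ← ofReal_norm, ← ofReal_norm,
      hΦ _ (V.sub_mem h.1 h.2)]

end oscAlong

section oscDir

variable {X Y : Type*} [NormedAddCommGroup X] [NormedSpace ℝ X]
  [NormedAddCommGroup Y] [NormedSpace ℝ Y]

theorem oscDir_eq_oscAlong (f : X → Y) (x v : X) :
    oscDir f x v = oscAlong (fun t : ℝ => t⁻¹ • (f (x + t • v) - f x)) (𝓝[≠] 0) := by
  rw [oscAlong, (nhdsWithin_basis_ball.prod_self).limsup_eq_iInf_iSup, oscDir]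
  refine iInf_congr fun ε => iInf_congr fun _ => ?_
  simp only [iSup_prod, edist_eq_enorm_sub, enorm_eq_nnnorm]
  refine iSup_congr fun t => iSup_congr fun s => iSup_congr_Prop ?_ fun _ => rfl
  simp only [Set.mem_prod, Set.mem_inter_iff, mem_ball, dist_zero_right, Real.norm_eq_abs,
    Set.mem_compl_iff, Set.mem_singleton_iff, abs_pos, ne_eq]
  tauto

theorem oscDir_eq_oscAlong_of_isLittleO {f : X → Y} {x v : X} {p : ℝ → X} {L : ℝ}
    (hp : (fun t => x + t • v - p t) =o[𝓝[≠] 0] fun t => t)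
    (hf : ∀ᶠ t in 𝓝[≠] 0, ‖f (x + t • v) - f (p t)‖ ≤ L * ‖x + t • v - p t‖) :
    oscDir f x v = oscAlong (fun t : ℝ => t⁻¹ • (f (p t) - f x)) (𝓝[≠] 0) := by
  rw [oscDir_eq_oscAlong]
  refine oscAlong_eq_of_tendsto_edist ?_
  have hquot := ((IsBigO.of_bound L hf).trans_isLittleO hp).tendsto_inv_smul_nhds_zero
  simpa [edist_eq_enorm_sub, ← smul_sub, Function.comp_def] using
    (continuous_enorm.tendsto 0).comp hquot

theorem GateauxDiffAt.infDist_isLittleO {G : Set X} {x : X} (hx : x ∈ G)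
    (hd : GateauxDiffAt (fun z => infDist z G) x) (v : X) :
    (fun t : ℝ => infDist (x + t • v) G) =o[𝓝[≠] 0] fun t => t := by
  obtain ⟨T, hT⟩ := hd
  simp only [infDist_zero_of_mem hx, sub_zero] at hT
  have hT_nonneg (u : X) : 0 ≤ T u :=
    ge_of_tendsto ((hT u).mono_left (nhdsGT_le_nhdsNE 0)) <| eventually_nhdsWithin_of_forall
      fun t ht => mul_nonneg (inv_nonneg.2 (le_of_lt ht)) infDist_nonneg
  have hTv : T v = 0 := le_antisymm (by simpa using hT_nonneg (-v)) (hT_nonneg v)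
  refine (isLittleO_iff_tendsto' ?_).2 ?_
  · exact eventually_mem_nhdsWithin.mono fun t ht h => absurd h ht
  · simpa only [div_eq_inv_mul, hTv] using hT v

theorem exists_mem_sub_isLittleO_of_infDist_isLittleO {G : Set X} {x v : X} (hx : x ∈ G)
    (h : (fun t : ℝ => infDist (x + t • v) G) =o[𝓝[≠] 0] fun t => t) :
    ∃ p : ℝ → X, (∀ t, p t ∈ G) ∧ (fun t => x + t • v - p t) =o[𝓝[≠] 0] fun t => t := by
  have hnear (t : ℝ) : ∃ y ∈ G, dist (x + t • v) y ≤ infDist (x + t • v) G + t ^ 2 := by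
    rcases eq_or_ne t 0 with rfl | ht
    · exact ⟨x, hx, by simp [infDist_zero_of_mem hx]⟩
    · obtain ⟨y, hy, hlt⟩ := (infDist_lt_iff ⟨x, hx⟩).1
        (lt_add_of_pos_right _ (by positivity : 0 < t ^ 2))
      exact ⟨y, hy, hlt.le⟩
  choose p hpG hp using hnear
  refine ⟨p, hpG, IsBigO.trans_isLittleO (isBigO_of_le _ fun t => ?_)
    (h.add ((isLittleO_pow_id one_lt_two).mono nhdsWithin_le_nhds))⟩
  rw [← dist_eq_norm, Real.norm_of_nonneg (add_nonneg infDist_nonneg (sq_nonneg t))]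
  exact hp t

theorem tendsto_of_sub_isLittleO {x v : X} {p : ℝ → X}
    (hp : (fun t => x + t • v - p t) =o[𝓝[≠] 0] fun t => t) :
    Tendsto (fun t => x + t • v - p t) (𝓝[≠] 0) (𝓝 0) ∧ Tendsto p (𝓝[≠] 0) (𝓝 x) := by
  have hsmall := hp.tendsto_zero_of_tendsto (tendsto_nhdsWithin_of_tendsto_nhds tendsto_id)
  have hline : Tendsto (fun t : ℝ => x + t • v) (𝓝[≠] 0) (𝓝 x) :=
    ((by fun_prop : Continuous fun t : ℝ => x + t • v).tendsto' 0 x (by simp)).mono_left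
      nhdsWithin_le_nhds
  exact ⟨hsmall, by simpa using hline.sub hsmall⟩

end oscDir

section lpInfty

variable {ι Y : Type*} [NormedAddCommGroup Y] [NormedSpace ℝ Y]

theorem norm_apply_le_of_norm_le_one {φ : StrongDual ℝ Y} (hφ : ‖φ‖ ≤ 1) (z : Y) :
    ‖φ z‖ ≤ ‖z‖ :=
  (φ.le_of_opNorm_le hφ z).trans_eq (one_mul _)

noncomputable def toLpInfty (φ : ι → StrongDual ℝ Y) (hφ : ∀ i, ‖φ i‖ ≤ 1) :
    Y →L[ℝ] ℓ^∞(ι, ℝ) :=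
  LinearMap.mkContinuous
    { toFun := fun z => ⟨fun i => φ i z, memℓp_infty ⟨‖z‖, by
        rintro _ ⟨i, rfl⟩; exact norm_apply_le_of_norm_le_one (hφ i) z⟩⟩
      map_add' := fun z z' => by ext i; exact map_add (φ i) z z'
      map_smul' := fun c z => by ext i; simp }
    1 fun z => by
      simpa using lp.norm_le_of_forall_le (norm_nonneg z)
        fun i => norm_apply_le_of_norm_le_one (hφ i) z

theorem norm_toLpInfty_apply_le (φ : ι → StrongDual ℝ Y) (hφ : ∀ i, ‖φ i‖ ≤ 1) (z : Y) :
    ‖toLpInfty φ hφ z‖ ≤ ‖z‖ :=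
  lp.norm_le_of_forall_le (norm_nonneg z) fun i => norm_apply_le_of_norm_le_one (hφ i) z

theorem TopologicalSpace.IsSeparable.exists_continuousLinearMap_lpInfty_norm_eq {s : Set Y}
    (hs : IsSeparable s) : ∃ Φ : Y →L[ℝ] ℓ^∞(ℕ, ℝ), ∀ z ∈ s, ‖Φ z‖ = ‖z‖ := by
  obtain ⟨c, hc, hsc⟩ := hs
  obtain ⟨y, hy⟩ := (hc.insert 0).exists_eq_range (Set.insert_nonempty 0 c)
  choose φ hφ hφy using fun n => exists_dual_vector'' ℝ (y n)
  refine ⟨toLpInfty φ hφ, fun z hz => (norm_toLpInfty_apply_le φ hφ z).antisymm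
    (le_of_forall_pos_le_add fun ε hε => ?_)⟩
  have hzy : z ∈ closure (Set.range y) :=
    hy ▸ closure_mono (Set.subset_insert 0 c) (hsc hz)
  obtain ⟨_, ⟨n, rfl⟩, hn⟩ := Metric.mem_closure_iff.mp hzy (ε / 2) (half_pos hε)
  rw [dist_eq_norm] at hn
  have hφn := norm_apply_le_of_norm_le_one (hφ n) (z - y n)
  have hΦn : ‖φ n z‖ ≤ ‖toLpInfty φ hφ z‖ :=
    lp.norm_apply_le_norm ENNReal.top_ne_zero (toLpInfty φ hφ z) n
  calc ‖z‖ ≤ ‖y n‖ + ‖z - y n‖ := norm_le_norm_add_norm_sub' z (y n)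
    _ = φ n z - φ n (z - y n) + ‖z - y n‖ := by
      rw [map_sub, sub_sub_cancel, hφy, RCLike.ofReal_real_eq_id, id]
    _ ≤ ‖toLpInfty φ hφ z‖ + ε := by
      linarith [Real.le_norm_self (φ n z), neg_le_of_abs_le hφn]

theorem LipschitzOnWith.exists_lpInfty_extension {X : Type*} [PseudoMetricSpace X]
    {f : X → Y} {K : ℝ≥0} {S : Set X} (hf : LipschitzOnWith K f S)
    (hS : TopologicalSpace.IsSeparable S) :
    ∃ (Φ : Y →L[ℝ] ℓ^∞(ℕ, ℝ)) (H : X → ℓ^∞(ℕ, ℝ)), (∀ z ∈ Submodule.span ℝ (f '' S),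
      ‖Φ z‖ = ‖z‖) ∧ LipschitzWith K H ∧ Set.EqOn (Φ ∘ f) H S := by
  obtain ⟨Φ, hΦ⟩ := (hf.continuousOn.isSeparable_image hS).span (R := ℝ)
    |>.exists_continuousLinearMap_lpInfty_norm_eq
  have hΦf : LipschitzOnWith K (Φ ∘ f) S := LipschitzOnWith.of_dist_le_mul fun a ha b hb => by
    have hab : f a - f b ∈ Submodule.span ℝ (f '' S) :=
      sub_mem (Submodule.subset_span ⟨a, ha, rfl⟩) (Submodule.subset_span ⟨b, hb, rfl⟩)
    rw [Function.comp_apply, Function.comp_apply, dist_eq_norm, ← map_sub, hΦ _ hab,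
      ← dist_eq_norm]
    exact hf.dist_le_mul a ha b hb
  obtain ⟨H, hH, hΦH⟩ := hΦf.extend_lp_infty
  exact ⟨Φ, H, hΦ, hH, hΦH⟩

end lpInfty

theorem exists_lipschitz_extension_same_osc_general
    {X Y : Type*} [NormedAddCommGroup X] [NormedSpace ℝ X]
    [TopologicalSpace.SeparableSpace X]
    [NormedAddCommGroup Y] [NormedSpace ℝ Y]
    (G : Set X) (f : X → Y) (L δ : ℝ)
    (hf : ∀ y ∈ G, ∀ x : X, ‖x - y‖ < δ → ‖f x - f y‖ ≤ L * ‖x - y‖)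
    (w : X) :
    ∃ H : X → lp (fun _ : ℕ => ℝ) ∞, LipschitzWith (Real.toNNReal L) H ∧
      ∀ x ∈ G ∩ Metric.ball w (δ / 4),
        GateauxDiffAt (fun z => Metric.infDist z G) x →
        ∀ v : X, v ≠ 0 → oscDir f x v = oscDir H x v := by
  set S := G ∩ ball w (δ / 4)
  have hfS : LipschitzOnWith (Real.toNNReal L) f S := .of_dist_le_mul fun a ha b hb => by
    have hab : ‖a - b‖ < δ := by
      rw [← dist_eq_norm]
      linarith [dist_triangle_right a b w, mem_ball.1 ha.2, mem_ball.1 hb.2,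
        dist_nonneg (x := a) (y := w)]
    rw [dist_eq_norm, dist_eq_norm]
    exact (hf b hb.1 a hab).trans (by gcongr; exact Real.le_coe_toNNReal L)
  obtain ⟨Φ, H, hΦ, hH, hΦH⟩ := hfS.exists_lpInfty_extension (.of_separableSpace S)
  refine ⟨H, hH, fun x hx hd v _ => ?_⟩
  obtain ⟨p, hpG, hp⟩ :=
    exists_mem_sub_isLittleO_of_infDist_isLittleO hx.1 (hd.infDist_isLittleO hx.1 v)
  obtain ⟨hp_small, hpx⟩ := tendsto_of_sub_isLittleO hp
  have hpS : ∀ᶠ t in 𝓝[≠] 0, p t ∈ S :=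
    (hpx.eventually (isOpen_ball.mem_nhds hx.2)).mono fun t ht => ⟨hpG t, ht⟩
  have hδ : ∀ᶠ t in 𝓝[≠] 0, ‖x + t • v - p t‖ < δ := (tendsto_norm_zero.comp hp_small).eventually
    (gt_mem_nhds (by linarith [mem_ball.1 hx.2, dist_nonneg (x := x) (y := w)]))
  calc oscDir f x v
      = oscAlong (fun t : ℝ => t⁻¹ • (f (p t) - f x)) (𝓝[≠] 0) :=
        oscDir_eq_oscAlong_of_isLittleO hp (hδ.mono fun t ht => hf (p t) (hpG t) _ ht)
    _ = oscAlong (fun t : ℝ => Φ (t⁻¹ • (f (p t) - f x))) (𝓝[≠] 0) :=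
        (oscAlong_map_eq (V := (Submodule.span ℝ (f '' S)).toAddSubgroup) hΦ <|
          hpS.mono fun t ht => Submodule.smul_mem _ _ <|
            sub_mem (Submodule.subset_span ⟨_, ht, rfl⟩) (Submodule.subset_span ⟨_, hx, rfl⟩)).symm
    _ = oscAlong (fun t : ℝ => t⁻¹ • (H (p t) - H x)) (𝓝[≠] 0) :=
        Filter.EventuallyEq.oscAlong_eq <| hpS.mono fun t ht => by
          simp only [← hΦH ht, ← hΦH hx, Function.comp_apply, map_smul, map_sub]
    _ = oscDir H x v :=
        (oscDir_eq_oscAlong_of_isLittleO hp (.of_forall fun t => by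
          simpa only [dist_eq_norm] using hH.dist_le_mul (x + t • v) (p t))).symm

theorem exists_lipschitz_extension_same_osc
    {X Y : Type*} [NormedAddCommGroup X] [NormedSpace ℝ X] [CompleteSpace X]
    [TopologicalSpace.SeparableSpace X]
    [NormedAddCommGroup Y] [NormedSpace ℝ Y] [CompleteSpace Y]
    (G : Set X) (hG : IsClosed G) (f : X → Y) (L δ : ℝ) (hL : 0 < L) (hδ : 0 < δ)
    (hf : ∀ y ∈ G, ∀ x : X, ‖x - y‖ < δ → ‖f x - f y‖ ≤ L * ‖x - y‖)
    (w : X) (hw : w ∈ G) :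
    ∃ H : X → lp (fun _ : ℕ => ℝ) ∞, LipschitzWith (Real.toNNReal L) H ∧
      ∀ x ∈ G ∩ Metric.ball w (δ / 4),
        GateauxDiffAt (fun z => Metric.infDist z G) x →
        ∀ v : X, v ≠ 0 → oscDir f x v = oscDir H x v :=
  exists_lipschitz_extension_same_osc_general G f L δ hf w
end

section
/- Let Y be a Banach space with the Radon–Nikodým property and let g : ℝ → Y be pointwise Lipschitz at every point of a set B ⊂ ℝ (i.e., limsup_{s→t}‖g(s)−g(t)‖/|s−t| < ∞ for all t ∈ B). Then g is differentiable at almost every point of B. -/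
/-!
Cut the points where `g` is pointwise Lipschitz into countably many closed sets `E` on which
`g` is uniformly pointwise Lipschitz at a fixed scale `r`, and then into pieces shorter than `r`.
On such a piece `g` is Lipschitz, so it has a Lipschitz extension `h` to `ℝ` (affine across the
gaps), and `h` is differentiable almost everywhere by the RNP. At a density point `t` of `E`,
every `s` near `t` lies within `o(|s - t|)` of some `s' ∈ E`; the pointwise Lipschitz bound at
`s'` then carries the derivative of `h` at `t` over to `g`.
-/

open MeasureTheory Set Metric Filter Asymptotics
open scoped NNReal Topology

section GapInterpolation

variable {Y : Type*} [NormedAddCommGroup Y] [NormedSpace ℝ Y] {A : Set ℝ} {f : ℝ → Y}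

/-- For `z ∈ A` both endpoints equal `z` and the coefficient is the junk value `0 / 0 = 0`. -/
noncomputable def gapInterpolation (A : Set ℝ) (f : ℝ → Y) (z : ℝ) : Y :=
  AffineMap.lineMap (f (sSup (A ∩ Iic z))) (f (sInf (A ∩ Ici z)))
    ((z - sSup (A ∩ Iic z)) / (sInf (A ∩ Ici z) - sSup (A ∩ Iic z)))

theorem gapInterpolation_of_mem {z : ℝ} (hz : z ∈ A) : gapInterpolation A f z = f z := by
  have hsup : sSup (A ∩ Iic z) = z :=
    IsGreatest.csSup_eq ⟨⟨hz, self_mem_Iic⟩, fun _ hw => hw.2⟩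
  have hinf : sInf (A ∩ Ici z) = z :=
    IsLeast.csInf_eq ⟨⟨hz, self_mem_Ici⟩, fun _ hw => hw.2⟩
  simp [gapInterpolation, hsup, hinf]

theorem IsClosed.exists_gap (hA : IsClosed A) {x : ℝ} (hl : (A ∩ Iic x).Nonempty)
    (hu : (A ∩ Ici x).Nonempty) :
    ∃ p ∈ A, ∃ q ∈ A, x ∈ Icc p q ∧ ∀ w ∈ A, w ∉ Ioo p q := by
  have hbddA : BddAbove (A ∩ Iic x) := ⟨x, fun _ hw => hw.2⟩
  have hbddB : BddBelow (A ∩ Ici x) := ⟨x, fun _ hw => hw.2⟩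
  obtain ⟨hpA, hpx⟩ := (hA.inter isClosed_Iic).csSup_mem hl hbddA
  obtain ⟨hqA, hqx⟩ := (hA.inter isClosed_Ici).csInf_mem hu hbddB
  refine ⟨_, hpA, _, hqA, ⟨hpx, hqx⟩, fun w hw ⟨hpw, hwq⟩ => ?_⟩
  rcases le_total w x with hwx | hxw
  · exact hpw.not_ge (le_csSup hbddA ⟨hw, hwx⟩)
  · exact hwq.not_ge (csInf_le hbddB ⟨hw, hxw⟩)

theorem gapInterpolation_eq_lineMap {p q z : ℝ} (hp : p ∈ A) (hq : q ∈ A)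
    (hgap : ∀ w ∈ A, w ∉ Ioo p q) (hz : z ∈ Icc p q) :
    gapInterpolation A f z = AffineMap.lineMap (f p) (f q) ((z - p) / (q - p)) := by
  rcases eq_or_lt_of_le hz.1 with rfl | hpz
  · simp [gapInterpolation_of_mem hp]
  rcases eq_or_lt_of_le hz.2 with rfl | hzq
  · simp [gapInterpolation_of_mem hq, div_self (sub_pos.2 hpz).ne']
  have hsup : sSup (A ∩ Iic z) = p := IsGreatest.csSup_eq ⟨⟨hp, hz.1⟩,
    fun w ⟨hw, hwz⟩ => not_lt.1 fun hpw => hgap w hw ⟨hpw, hwz.trans_lt hzq⟩⟩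
  have hinf : sInf (A ∩ Ici z) = q := IsLeast.csInf_eq ⟨⟨hq, hz.2⟩,
    fun w ⟨hw, hzw⟩ => not_lt.1 fun hwq => hgap w hw ⟨hpz.trans_le hzw, hwq⟩⟩
  rw [gapInterpolation, hsup, hinf]

theorem dist_gapInterpolation_le_of_gap {K : ℝ≥0} (hf : LipschitzOnWith K f A) {p q z w : ℝ}
    (hp : p ∈ A) (hq : q ∈ A) (hgap : ∀ w ∈ A, w ∉ Ioo p q) (hz : z ∈ Icc p q)
    (hw : w ∈ Icc p q) :
    dist (gapInterpolation A f z) (gapInterpolation A f w) ≤ K * dist z w := by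
  rcases eq_or_lt_of_le (hz.1.trans hz.2) with rfl | hpq
  · rw [le_antisymm hz.2 hz.1, le_antisymm hw.2 hw.1]
    simp
  rw [gapInterpolation_eq_lineMap hp hq hgap hz, gapInterpolation_eq_lineMap hp hq hgap hw,
    dist_lineMap_lineMap]
  have hqp : 0 < q - p := sub_pos.2 hpq
  calc dist ((z - p) / (q - p)) ((w - p) / (q - p)) * dist (f p) (f q)
      ≤ dist z w / (q - p) * (K * (q - p)) := by
        gcongr
        · simp only [Real.dist_eq, ← sub_div, sub_sub_sub_cancel_right, abs_div, abs_of_pos hqp,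
            le_refl]
        · exact (hf.dist_le_mul p hp q hq).trans_eq
            (by rw [Real.dist_eq, abs_sub_comm, abs_of_pos hqp])
    _ = K * dist z w := by field_simp

theorem dist_gapInterpolation_le (hA : IsClosed A) {K : ℝ≥0} (hf : LipschitzOnWith K f A)
    {x y : ℝ} (hxy : x ≤ y) (hx : (A ∩ Iic x).Nonempty) (hy : (A ∩ Ici y).Nonempty) :
    dist (gapInterpolation A f x) (gapInterpolation A f y) ≤ K * dist x y := by
  obtain ⟨p, hp, q, hq, hxpq, hgap⟩ :=
    hA.exists_gap hx (hy.mono (inter_subset_inter_right _ (Ici_subset_Ici.2 hxy)))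
  rcases le_or_gt y q with hyq | hqy
  · exact dist_gapInterpolation_le_of_gap hf hp hq hgap hxpq ⟨hxpq.1.trans hxy, hyq⟩
  obtain ⟨p', hp', q', hq', hypq', hgap'⟩ :=
    hA.exists_gap (hx.mono (inter_subset_inter_right _ (Iic_subset_Iic.2 hxy))) hy
  have hqp' : q ≤ p' := not_lt.1 fun h => hgap' q hq ⟨h, hqy.trans_le hypq'.2⟩
  calc dist (gapInterpolation A f x) (gapInterpolation A f y)
      ≤ dist (gapInterpolation A f x) (gapInterpolation A f q)
        + dist (gapInterpolation A f q) (gapInterpolation A f p')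
        + dist (gapInterpolation A f p') (gapInterpolation A f y) := dist_triangle4 _ _ _ _
    _ ≤ K * dist x q + K * dist q p' + K * dist p' y := by
        gcongr
        · exact dist_gapInterpolation_le_of_gap hf hp hq hgap hxpq
            ⟨hxpq.1.trans hxpq.2, le_rfl⟩
        · rw [gapInterpolation_of_mem hq, gapInterpolation_of_mem hp']
          exact hf.dist_le_mul q hq p' hp'
        · exact dist_gapInterpolation_le_of_gap hf hp' hq' hgap'
            ⟨le_rfl, hypq'.1.trans hypq'.2⟩ hypq'
    _ = K * dist x y := by
        simp only [Real.dist_eq, abs_of_nonpos (sub_nonpos.2 hxpq.2),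
          abs_of_nonpos (sub_nonpos.2 hqp'), abs_of_nonpos (sub_nonpos.2 hypq'.1),
          abs_of_nonpos (sub_nonpos.2 hxy)]
        ring

theorem LipschitzOnWith.exists_lipschitzWith_eqOn {K : ℝ≥0} (hf : LipschitzOnWith K f A)
    (hA : IsClosed A) (hAb : Bornology.IsBounded A) :
    ∃ h : ℝ → Y, LipschitzWith K h ∧ EqOn h f A := by
  rcases A.eq_empty_or_nonempty with rfl | hne
  · exact ⟨0, LipschitzWith.const' 0, eqOn_empty _ _⟩
  set m := sInf A
  set M := sSup A
  have hm : m ∈ A := hA.csInf_mem hne hAb.bddBelow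
  have hM : M ∈ A := hA.csSup_mem hne hAb.bddAbove
  have hlip : LipschitzOnWith K (gapInterpolation A f) (Icc m M) := by
    refine LipschitzOnWith.of_dist_le_mul fun x hx y hy => ?_
    have hl : ∀ z ∈ Icc m M, (A ∩ Iic z).Nonempty := fun z hz => ⟨m, hm, hz.1⟩
    have hu : ∀ z ∈ Icc m M, (A ∩ Ici z).Nonempty := fun z hz => ⟨M, hM, hz.2⟩
    rcases le_total x y with hxy | hyx
    · exact dist_gapInterpolation_le hA hf hxy (hl x hx) (hu y hy)
    · rw [dist_comm, dist_comm x]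
      exact dist_gapInterpolation_le hA hf hyx (hl y hy) (hu x hx)
  have hclamp : LipschitzWith 1 fun z => max m (min z M) :=
    (LipschitzWith.id.min_const M).const_max m
  refine ⟨gapInterpolation A f ∘ fun z => max m (min z M), ?_, fun z hz => ?_⟩
  · simpa using lipschitzOnWith_univ.1 (hlip.comp hclamp.lipschitzOnWith
      fun z _ => ⟨le_max_left _ _, max_le (csInf_le hAb.bddBelow hM) (min_le_right _ _)⟩)
  · rw [Function.comp_apply, min_eq_left (le_csSup hAb.bddAbove hz),
      max_eq_right (csInf_le hAb.bddBelow hz), gapInterpolation_of_mem hz]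

end GapInterpolation

theorem IsUnifLocDoublingMeasure.ae_isLittleO_infDist {α : Type*} [MetricSpace α]
    [MeasurableSpace α] [SecondCountableTopology α] [BorelSpace α] (μ : Measure α)
    [IsUnifLocDoublingMeasure μ] [IsLocallyFiniteMeasure μ] (S : Set α) :
    ∀ᵐ x ∂μ.restrict S, (fun y => infDist y S) =o[𝓝 x] fun y => dist y x := by
  have hcl : ∀ᵐ x ∂μ.restrict S, x ∈ closure S :=
    ae_mono (Measure.restrict_mono subset_closure le_rfl)
      (ae_restrict_mem isClosed_closure.measurableSet)
  have hdens := ae_all_iff.2 fun n : ℕ => ae_tendsto_measure_inter_div μ S (n + 1)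
  -- balls around `y` of radius `dist y x / (n + 1)` are admissible for the density theorem at `x`
  filter_upwards [hcl, hdens] with x hxS hx
  refine isLittleO_iff.2 fun c hc => ?_
  obtain ⟨n, hn⟩ := exists_nat_one_div_lt hc
  set δ : α → ℝ := fun y => dist y x / (n + 1)
  have hδ : Tendsto δ (𝓝[≠] x) (𝓝[>] 0) := by
    refine tendsto_nhdsWithin_iff.2 ⟨?_, ?_⟩
    · have : Tendsto δ (𝓝 x) (𝓝 (dist x x / (n + 1))) :=
        ((continuous_id.dist continuous_const).div_const _).tendsto x
      simpa using this.mono_left nhdsWithin_le_nhds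
    · filter_upwards [self_mem_nhdsWithin] with y hy
      exact div_pos (dist_pos.2 hy) (by positivity)
  have hmem : ∀ᶠ y in 𝓝[≠] x, x ∈ closedBall (id y) ((n + 1) * δ y) :=
    Eventually.of_forall fun y => by
      rw [id, mem_closedBall, dist_comm, mul_div_cancel₀ _ (by positivity)]
  have hpos := (hx n id δ hδ hmem).eventually (eventually_ne_nhds one_ne_zero)
  rw [eventually_nhdsWithin_iff] at hpos
  filter_upwards [hpos] with y hy
  rcases eq_or_ne y x with rfl | hyx
  · simp [(mem_closure_iff_infDist_zero (closure_nonempty_iff.1 ⟨y, hxS⟩)).1 hxS]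
  obtain ⟨z, hzS, hzy⟩ : (S ∩ closedBall y (δ y)).Nonempty :=
    nonempty_of_measure_ne_zero fun h0 => hy hyx (by rw [id, h0, ENNReal.zero_div])
  rw [Real.norm_of_nonneg infDist_nonneg, Real.norm_of_nonneg dist_nonneg]
  calc infDist y S ≤ dist y z := infDist_le_dist_of_mem hzS
    _ ≤ δ y := by rw [dist_comm]; exact hzy
    _ = 1 / (n + 1) * dist y x := one_div_mul_eq_div _ _ |>.symm
    _ ≤ c * dist y x := by gcongr

section PointwiseLipschitz

variable {X Z : Type*} [PseudoMetricSpace X] [PseudoMetricSpace Z]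

def pointwiseLipschitzSet (g : X → Z) (C : ℝ≥0) (r : ℝ) : Set X :=
  {t | ∀ s, dist s t < r → dist (g s) (g t) ≤ C * dist s t}

theorem isClosed_pointwiseLipschitzSet (g : X → Z) (C : ℝ≥0) (r : ℝ) :
    IsClosed (pointwiseLipschitzSet g C r) := by
  refine isClosed_of_closure_subset fun t ht s hst => ?_
  have := mem_closure_iff_nhdsWithin_neBot.1 ht
  have hlim : Tendsto (fun u => C * (dist s u + dist t u)) (𝓝[pointwiseLipschitzSet g C r] t)
      (𝓝 (C * dist s t)) := by
    have : Continuous fun u => C * (dist s u + dist t u) := by fun_prop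
    simpa using (this.tendsto t).mono_left nhdsWithin_le_nhds
  refine ge_of_tendsto hlim ?_
  filter_upwards [self_mem_nhdsWithin,
    nhdsWithin_le_nhds (ball_mem_nhds t (sub_pos.2 hst))] with u hu hut
  rw [mem_ball, dist_comm] at hut
  have hsu : dist s u < r := (dist_triangle s t u).trans_lt (by linarith)
  have htu : dist t u < r := hut.trans_le (by linarith [dist_nonneg (x := s) (y := t)])
  calc dist (g s) (g t) ≤ dist (g s) (g u) + dist (g t) (g u) := dist_triangle_right _ _ _
    _ ≤ C * dist s u + C * dist t u := add_le_add (hu s hsu) (hu t htu)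
    _ = C * (dist s u + dist t u) := by ring

theorem exists_mem_pointwiseLipschitzSet {g : X → Z} {t : X}
    (h : ∃ C : ℝ, ∃ δ > (0 : ℝ), ∀ s, dist s t < δ →
      dist (g s) (g t) ≤ C * dist s t) :
    ∃ n : ℕ, t ∈ pointwiseLipschitzSet g (n + 1) ((n : ℝ) + 1)⁻¹ := by
  obtain ⟨C, δ, hδ, hC⟩ := h
  obtain ⟨n, hn⟩ := exists_nat_ge (max C δ⁻¹)
  refine ⟨n, fun s hs => ?_⟩
  have hsδ : dist s t < δ :=
    hs.trans_le (inv_le_of_inv_le₀ hδ ((le_max_right _ _).trans (hn.trans (by linarith))))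
  calc dist (g s) (g t) ≤ C * dist s t := hC s hsδ
    _ ≤ ((n + 1 : ℝ≥0) : ℝ) * dist s t := by
        gcongr
        push_cast
        linarith [le_max_left C δ⁻¹]

theorem LipschitzOnWith.of_subset_pointwiseLipschitzSet {g : X → Z} {C : ℝ≥0} {r : ℝ}
    {E : Set X} (hE : E ⊆ pointwiseLipschitzSet g C r)
    (hEr : ∀ x ∈ E, ∀ y ∈ E, dist x y < r) :
    LipschitzOnWith C g E :=
  LipschitzOnWith.of_dist_le_mul fun x hx y hy => hE hy x (hEr x hx y hy)

end PointwiseLipschitz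

section Differentiability

variable {Y : Type*} [NormedAddCommGroup Y] [NormedSpace ℝ Y]

theorem HasDerivAt.of_eqOn_of_isLittleO_infDist {g h : ℝ → Y} {E : Set ℝ} {C : ℝ≥0}
    {r t : ℝ} {d : Y} (hd : HasDerivAt h d t) (hhg : EqOn h g E) (hEc : IsClosed E) (hr : 0 < r)
    (hE : E ⊆ pointwiseLipschitzSet g C r) (ht : t ∈ E)
    (hdens : (fun s => infDist s E) =o[𝓝 t] fun s => dist s t) :
    HasDerivAt g d t := by
  choose σ hσE hσ using fun s => hEc.exists_infDist_eq_dist ⟨t, ht⟩ s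
  have hσs : (fun s => σ s - s) =o[𝓝 t] fun s => s - t := by
    refine isLittleO_norm_norm.1 (hdens.congr (fun s => ?_) (fun s => dist_eq_norm s t))
    rw [hσ, dist_comm, dist_eq_norm]
  have hσt : (fun s => σ s - t) =O[𝓝 t] fun s => s - t := by
    refine (hσs.isBigO.add (isBigO_refl _ _)).congr_left fun s => ?_
    abel
  have hσlim : Tendsto σ (𝓝 t) (𝓝 t) :=
    tendsto_sub_nhds_zero_iff.1 (hσt.trans_tendsto (tendsto_sub_nhds_zero_iff.2 tendsto_id))
  have hg_near : (fun s => g s - g (σ s)) =o[𝓝 t] fun s => s - t := by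
    refine IsBigO.trans_isLittleO (IsBigO.of_bound C ?_) hσs
    filter_upwards [ball_mem_nhds t hr] with s hs
    have hσ_le : dist s (σ s) ≤ dist s t := hσ s ▸ infDist_le_dist_of_mem ht
    rw [← dist_eq_norm, ← dist_eq_norm, dist_comm (σ s)]
    exact hE (hσE s) s (hσ_le.trans_lt hs)
  have hh_near : (fun s => h (σ s) - h t - (σ s - t) • d) =o[𝓝 t] fun s => s - t :=
    ((hasDerivAt_iff_isLittleO.1 hd).comp_tendsto hσlim).trans_isBigO hσt
  have hd_near : (fun s => (σ s - s) • d) =o[𝓝 t] fun s => s - t :=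
    (IsBigO.of_bound ‖d‖ (Eventually.of_forall fun s => by
      rw [norm_smul, mul_comm])).trans_isLittleO hσs
  refine hasDerivAt_iff_isLittleO.2 (((hg_near.add hh_near).add hd_near).congr_left fun s => ?_)
  rw [hhg (hσE s), hhg ht, sub_smul, sub_smul, sub_smul]
  abel

theorem ae_differentiableAt_of_eqOn {g h : ℝ → Y} {E : Set ℝ} {C : ℝ≥0} {r : ℝ}
    (hEc : IsClosed E) (hr : 0 < r) (hE : E ⊆ pointwiseLipschitzSet g C r) (hhg : EqOn h g E)
    (hh : ∀ᵐ t, DifferentiableAt ℝ h t) :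
    ∀ᵐ t, t ∈ E → DifferentiableAt ℝ g t := by
  have hdens := (ae_restrict_iff' hEc.measurableSet).1
    (IsUnifLocDoublingMeasure.ae_isLittleO_infDist volume E)
  filter_upwards [hh, hdens] with t hht hdt htE
  exact (hht.hasDerivAt.of_eqOn_of_isLittleO_infDist hhg hEc hr hE htE
    (hdt htE)).differentiableAt

theorem ae_differentiableAt_of_mem_pointwiseLipschitzSet
    (hRNP : ∀ (h : ℝ → Y) (C : ℝ≥0), LipschitzWith C h →
      ∀ᵐ t : ℝ ∂volume, DifferentiableAt ℝ h t)
    (g : ℝ → Y) (C : ℝ≥0) {r : ℝ} (hr : 0 < r) :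
    ∀ᵐ t, t ∈ pointwiseLipschitzSet g C r → DifferentiableAt ℝ g t := by
  set P := pointwiseLipschitzSet g C r
  have hpiece : ∀ k : ℤ, ∀ᵐ t, t ∈ P ∩ Icc (k • (r / 2)) ((k + 1) • (r / 2)) →
      DifferentiableAt ℝ g t := by
    intro k
    have hEc : IsClosed (P ∩ Icc (k • (r / 2)) ((k + 1) • (r / 2))) :=
      (isClosed_pointwiseLipschitzSet g C r).inter isClosed_Icc
    have hlip : LipschitzOnWith C g (P ∩ Icc (k • (r / 2)) ((k + 1) • (r / 2))) :=
      .of_subset_pointwiseLipschitzSet inter_subset_left fun x hx y hy =>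
        (Real.dist_le_of_mem_Icc hx.2 hy.2).trans_lt (by rw [add_smul, one_smul]; linarith)
    obtain ⟨h, hh, hhg⟩ :=
      hlip.exists_lipschitzWith_eqOn hEc ((isBounded_Icc _ _).subset inter_subset_right)
    exact ae_differentiableAt_of_eqOn hEc hr inter_subset_left hhg (hRNP h C hh)
  filter_upwards [ae_all_iff.2 hpiece] with t ht htP
  obtain ⟨k, hk⟩ := mem_iUnion.1 (iUnion_Icc_add_zsmul (half_pos hr) 0 ▸ mem_univ t)
  exact ht k ⟨htP, by simpa only [zero_add] using hk⟩

end Differentiability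

theorem stepanov_for_RNP_general
    {Y : Type*} [NormedAddCommGroup Y] [NormedSpace ℝ Y]
    (hRNP : ∀ (h : ℝ → Y) (C : ℝ≥0), LipschitzWith C h →
      ∀ᵐ t : ℝ ∂volume, DifferentiableAt ℝ h t)
    (g : ℝ → Y) (B : Set ℝ)
    (hg : ∀ t ∈ B, ∃ C : ℝ, ∃ δ > (0:ℝ), ∀ s : ℝ, |s - t| < δ →
      ‖g s - g t‖ ≤ C * |s - t|) :
    volume {t : ℝ | t ∈ B ∧ ¬ DifferentiableAt ℝ g t} = 0 := by
  simp_rw [← Real.dist_eq, ← dist_eq_norm] at hg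
  have hae : ∀ᵐ t, ∀ n : ℕ, t ∈ pointwiseLipschitzSet g (n + 1) ((n : ℝ) + 1)⁻¹ →
      DifferentiableAt ℝ g t :=
    ae_all_iff.2 fun n => ae_differentiableAt_of_mem_pointwiseLipschitzSet hRNP g _ (by positivity)
  refine measure_mono_null (fun t ⟨htB, htd⟩ => ?_) (ae_iff.1 hae)
  obtain ⟨n, hn⟩ := exists_mem_pointwiseLipschitzSet (hg t htB)
  exact fun h => htd (h n hn)

theorem stepanov_for_RNP
    {Y : Type*} [NormedAddCommGroup Y] [NormedSpace ℝ Y] [CompleteSpace Y]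
    (hRNP : ∀ (h : ℝ → Y) (C : ℝ≥0), LipschitzWith C h →
      ∀ᵐ t : ℝ ∂volume, DifferentiableAt ℝ h t)
    (g : ℝ → Y) (B : Set ℝ)
    (hg : ∀ t ∈ B, ∃ C : ℝ, ∃ δ > (0:ℝ), ∀ s : ℝ, |s - t| < δ →
      ‖g s - g t‖ ≤ C * |s - t|) :
    volume {t : ℝ | t ∈ B ∧ ¬ DifferentiableAt ℝ g t} = 0 :=
  stepanov_for_RNP_general hRNP g B hg
end
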